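/- arXiv:1706.03124 — 9 statements merged into one kernel-verified Lean document; each statement's English description precedes it below -/
import Mathlib

section
/- Let x ∈ [0,1] be given by a Cantor series representation x = ∑_{k=1}^∞ ε_k/(q_1 q_2 ⋯ q_k). Then x is a rational number if and only if there exist an integer n ≥ 0 and a positive integer m such that σ^n(x) = σ^{n+m}(x), where σ^n(x) = ∑_{k=n+1}^∞ ε_k/(q_{n+1} q_{n+2} ⋯ q_k). -/
/-!
Multiplying by `q_{n+1}` shifts the series: `σ^{n+1}(x) = q_{n+1} σ^n(x) - ε_{n+1}`, hence
`σ^{n+m}(x) = P σ^n(x) - B` with integers `B` and `P = q_{n+1} ⋯ q_{n+m}`.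
If `x = a / d`, every `σ^n(x)` therefore lies in the finite set `[0, 1] ∩ d⁻¹ ℤ`, and two shifts
coincide. Conversely `σ^n(x) = σ^{n+m}(x)` with `m > 0` gives `σ^n(x) = B / (P - 1)` since `P ≥ 2`,
and `x` is recovered rationally from `σ^n(x)`.
-/

open Finset

noncomputable def cantorTerm (q ε : ℕ → ℕ) (n k : ℕ) : ℝ :=
  (ε (n + k) : ℝ) / ∏ i ∈ Ico n (n + k + 1), (q i : ℝ)

/-- The paper's `σ^n(x)`, in the 0-indexed convention of the statement. -/
noncomputable def cantorShift (q ε : ℕ → ℕ) (n : ℕ) : ℝ :=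
  ∑' k, cantorTerm q ε n k

section

variable {q ε : ℕ → ℕ}

lemma cantorTerm_nonneg (n k : ℕ) : 0 ≤ cantorTerm q ε n k := by
  unfold cantorTerm
  positivity

lemma cantorTerm_le_sub (hε : ∀ k, ε k < q k) (n k : ℕ) :
    cantorTerm q ε n k ≤
      1 / ∏ i ∈ Ico n (n + k), (q i : ℝ) - 1 / ∏ i ∈ Ico n (n + k + 1), (q i : ℝ) := by
  have hq : ∀ i, (0 : ℝ) < q i := fun i => by exact_mod_cast Nat.zero_lt_of_lt (hε i)
  have hP : 0 < ∏ i ∈ Ico n (n + k), (q i : ℝ) := prod_pos fun i _ => hq i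
  have hεq : (ε (n + k) : ℝ) ≤ q (n + k) - 1 := by
    have : (ε (n + k) : ℝ) + 1 ≤ q (n + k) := by exact_mod_cast hε (n + k)
    linarith
  rw [cantorTerm, prod_Ico_succ_top (Nat.le_add_right n k)]
  calc (ε (n + k) : ℝ) / ((∏ i ∈ Ico n (n + k), (q i : ℝ)) * q (n + k))
      ≤ (q (n + k) - 1) / ((∏ i ∈ Ico n (n + k), (q i : ℝ)) * q (n + k)) := by gcongr
    _ = _ := by
      have := (hq (n + k)).ne'
      field_simp

lemma sum_range_cantorTerm_le_one (hε : ∀ k, ε k < q k) (n N : ℕ) :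
    ∑ k ∈ range N, cantorTerm q ε n k ≤ 1 := by
  set f : ℕ → ℝ := fun k => 1 / ∏ i ∈ Ico n (n + k), (q i : ℝ)
  calc ∑ k ∈ range N, cantorTerm q ε n k ≤ ∑ k ∈ range N, (f k - f (k + 1)) :=
        sum_le_sum fun k _ => cantorTerm_le_sub hε n k
    _ = 1 - f N := by rw [sum_range_sub']; simp [f]
    _ ≤ 1 := sub_le_self _ (by positivity)

lemma summable_cantorTerm (hε : ∀ k, ε k < q k) (n : ℕ) : Summable (cantorTerm q ε n) :=
  summable_of_sum_range_le (cantorTerm_nonneg n) (sum_range_cantorTerm_le_one hε n)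

lemma cantorShift_nonneg (n : ℕ) : 0 ≤ cantorShift q ε n :=
  tsum_nonneg (cantorTerm_nonneg n)

lemma cantorShift_le_one (hε : ∀ k, ε k < q k) (n : ℕ) : cantorShift q ε n ≤ 1 :=
  (summable_cantorTerm hε n).tsum_le_of_sum_range_le (sum_range_cantorTerm_le_one hε n)

lemma cantorTerm_succ (n k : ℕ) :
    cantorTerm q ε n (k + 1) = cantorTerm q ε (n + 1) k / q n := by
  rw [cantorTerm, cantorTerm, show n + (k + 1) = n + 1 + k by omega,
    prod_eq_prod_Ico_succ_bot (by omega : n < n + 1 + k + 1), div_div, mul_comm]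

lemma cantorShift_succ (hε : ∀ k, ε k < q k) (n : ℕ) :
    cantorShift q ε (n + 1) = q n * cantorShift q ε n - ε n := by
  have hq : (q n : ℝ) ≠ 0 := by exact_mod_cast (Nat.zero_lt_of_lt (hε n)).ne'
  have h : cantorShift q ε n = ε n / q n + cantorShift q ε (n + 1) / q n := by
    rw [cantorShift, (summable_cantorTerm hε n).tsum_eq_zero_add]
    simp only [cantorTerm_succ, tsum_div_const]
    simp [cantorTerm, cantorShift]
  rw [h]
  field_simp
  ring

lemma exists_cantorShift_add_eq (hε : ∀ k, ε k < q k) (n m : ℕ) :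
    ∃ B : ℤ, cantorShift q ε (n + m) = (∏ i ∈ Ico n (n + m), q i : ℕ) * cantorShift q ε n - B := by
  induction m with
  | zero => exact ⟨0, by simp⟩
  | succ m ih =>
    obtain ⟨B, hB⟩ := ih
    refine ⟨q (n + m) * B + ε (n + m), ?_⟩
    rw [← add_assoc, cantorShift_succ hε, hB, prod_Ico_succ_top (Nat.le_add_right n m)]
    push_cast
    ring

lemma exists_lt_cantorShift_eq_of_eq_rat (hε : ∀ k, ε k < q k) {r : ℚ}
    (hr : cantorShift q ε 0 = r) : ∃ a b, a < b ∧ cantorShift q ε a = cantorShift q ε b := by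
  refine Set.Finite.exists_lt_map_eq_of_forall_mem
    (t := (fun c : ℤ => (c : ℝ) / r.den) '' Set.Icc 0 r.den) (fun n => ?_)
    ((Set.finite_Icc _ _).image _)
  obtain ⟨B, hB⟩ := exists_cantorShift_add_eq hε 0 n
  rw [zero_add, hr] at hB
  have hd : (0 : ℝ) < r.den := by positivity
  set c : ℤ := (∏ i ∈ Ico 0 n, q i : ℕ) * r.num - B * r.den
  have hc : cantorShift q ε n = c / r.den := by
    rw [hB, Rat.cast_def]
    push_cast [c]
    field_simp
  have h0 := cantorShift_nonneg (q := q) (ε := ε) n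
  have h1 := cantorShift_le_one hε n
  rw [hc] at h0 h1
  refine ⟨c, ⟨?_, ?_⟩, hc.symm⟩
  · exact_mod_cast (by simpa using (le_div_iff₀ hd).1 h0 : (0 : ℝ) ≤ c)
  · exact_mod_cast (div_le_one hd).1 h1

lemma exists_rat_eq_cantorShift_of_eq (hq : ∀ k, 2 ≤ q k) (hε : ∀ k, ε k < q k) {n m : ℕ}
    (hm : 0 < m) (h : cantorShift q ε n = cantorShift q ε (n + m)) :
    ∃ r : ℚ, cantorShift q ε n = r := by
  obtain ⟨B, hB⟩ := exists_cantorShift_add_eq hε n m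
  set P := ∏ i ∈ Ico n (n + m), q i
  have hP : 2 ≤ P :=
    (hq n).trans (single_le_prod' (fun i _ => one_le_two.trans (hq i)) (by simp; omega))
  have hP' : (P : ℝ) - 1 ≠ 0 := by
    have : (2 : ℝ) ≤ P := by exact_mod_cast hP
    linarith
  refine ⟨B / (P - 1), ?_⟩
  rw [← h] at hB
  push_cast
  rw [eq_div_iff hP']
  linarith

lemma exists_rat_eq_cantorShift_zero (hε : ∀ k, ε k < q k) {n : ℕ} {r : ℚ}
    (h : cantorShift q ε n = r) : ∃ s : ℚ, cantorShift q ε 0 = s := by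
  obtain ⟨B, hB⟩ := exists_cantorShift_add_eq hε 0 n
  rw [zero_add, h] at hB
  have hP : ((∏ i ∈ Ico 0 n, q i : ℕ) : ℝ) ≠ 0 := by
    exact_mod_cast (prod_pos fun i _ => Nat.zero_lt_of_lt (hε i)).ne'
  refine ⟨(r + B) / (∏ i ∈ Ico 0 n, q i : ℕ), ?_⟩
  push_cast at hB hP ⊢
  rw [eq_div_iff hP]
  linarith

end

theorem cantor_rational_iff_shift_eq_general
    (q ε : ℕ → ℕ) (hq : ∀ k, 2 ≤ q k) (hε : ∀ k, ε k < q k)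
    (x : ℝ)
    (hx : x = ∑' k : ℕ, (ε k : ℝ) / ∏ i ∈ Finset.range (k + 1), (q i : ℝ)) :
    (∃ r : ℚ, x = (r : ℝ)) ↔
      ∃ n m : ℕ, 0 < m ∧
        (∑' k : ℕ, (ε (n + k) : ℝ) / ∏ i ∈ Finset.Ico n (n + k + 1), (q i : ℝ)) =
        (∑' k : ℕ, (ε (n + m + k) : ℝ) / ∏ i ∈ Finset.Ico (n + m) (n + m + k + 1), (q i : ℝ)) := by
  have hx0 : x = cantorShift q ε 0 :=
    hx.trans (tsum_congr fun k => by rw [cantorTerm, zero_add, range_eq_Ico])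
  change _ ↔ ∃ n m : ℕ, 0 < m ∧ cantorShift q ε n = cantorShift q ε (n + m)
  rw [hx0]
  constructor
  · rintro ⟨r, hr⟩
    obtain ⟨a, b, hab, h⟩ := exists_lt_cantorShift_eq_of_eq_rat hε hr
    exact ⟨a, b - a, Nat.sub_pos_of_lt hab, by rwa [Nat.add_sub_cancel' hab.le]⟩
  · rintro ⟨n, m, hm, h⟩
    obtain ⟨r, hr⟩ := exists_rat_eq_cantorShift_of_eq hq hε hm h
    exact exists_rat_eq_cantorShift_zero hε hr

/-- (Serbenyuk) A number `x ∈ [0,1]` represented by the Cantor series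
`x = ∑ ε_k / (q_1 ⋯ q_k)` is rational iff `σ^n(x) = σ^{n+m}(x)` for some `n ≥ 0`, `m ≥ 1`,
where `σ^n(x) = ∑_{k=n+1}^∞ ε_k / (q_{n+1} ⋯ q_k)`.
(Sequences are 0-indexed: `q i`, `ε i` denote the paper's `q_{i+1}`, `ε_{i+1}`.) -/
theorem cantor_rational_iff_shift_eq
    (q ε : ℕ → ℕ) (hq : ∀ k, 2 ≤ q k) (hε : ∀ k, ε k < q k)
    (x : ℝ) (hmem : x ∈ Set.Icc (0 : ℝ) 1)
    (hx : x = ∑' k : ℕ, (ε k : ℝ) / ∏ i ∈ Finset.range (k + 1), (q i : ℝ)) :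
    (∃ r : ℚ, x = (r : ℝ)) ↔
      ∃ n m : ℕ, 0 < m ∧
        (∑' k : ℕ, (ε (n + k) : ℝ) / ∏ i ∈ Finset.Ico n (n + k + 1), (q i : ℝ)) =
        (∑' k : ℕ, (ε (n + m + k) : ℝ) / ∏ i ∈ Finset.Ico (n + m) (n + m + k + 1), (q i : ℝ)) :=
  cantor_rational_iff_shift_eq_general q ε hq hε x hx
end

section
/- Let x ∈ [0,1] be given by a Cantor series representation x = ∑_{k=1}^∞ ε_k/(q_1 q_2 ⋯ q_k). Then x is a rational number if and only if there exist an integer n ≥ 0 and a positive integer m such that ∑_{k=n+1}^∞ ε_k/(q_1 q_2 ⋯ q_k) = q_{n+1} q_{n+2} ⋯ q_{n+m} · ∑_{k=n+m+1}^∞ ε_k/(q_1 q_2 ⋯ q_k). -/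
/-! The remainders `r_n = q_1 ⋯ q_n · ∑_{k>n} ε_k / (q_1 ⋯ q_k)` lie in `[0, 1]` and satisfy
`r_{n+1} = q_{n+1} r_n - ε_{n+1}`, so `r_n` differs from `q_1 ⋯ q_n · x` by an integer.
If `x = a / b`, every `b r_n` is an integer in `[0, b]`, so two remainders coincide, and
`r_n = r_{n+m}` is exactly the tail identity. Conversely, the tail identity gives
`r_n = r_{n+m} = q_{n+1} ⋯ q_{n+m} · r_n - A` with `A ∈ ℤ` and `q_{n+1} ⋯ q_{n+m} ≥ 2`,
so `r_n`, and with it `x`, is rational. -/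

open Finset

lemma exists_lt_eq_of_mem_Icc_of_mul_mem_int {y : ℕ → ℝ} {b : ℕ} (hb : 0 < b)
    (hy : ∀ n, y n ∈ Set.Icc 0 1) (hint : ∀ n, ∃ z : ℤ, b * y n = z) :
    ∃ a a', a < a' ∧ y a = y a' := by
  choose g hg using hint
  have hb' : (0 : ℝ) < b := Nat.cast_pos.2 hb
  have hg_mem : ∀ n, g n ∈ Set.Icc (0 : ℤ) b := fun n => by
    have h0 : (0 : ℝ) ≤ g n := hg n ▸ mul_nonneg hb'.le (hy n).1
    have h1 : (g n : ℝ) ≤ b := hg n ▸ mul_le_of_le_one_right hb'.le (hy n).2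
    exact ⟨by exact_mod_cast h0, by exact_mod_cast h1⟩
  obtain ⟨a, a', haa', hga⟩ := (Set.finite_Icc (0 : ℤ) b).exists_lt_map_eq_of_forall_mem hg_mem
  refine ⟨a, a', haa', mul_left_cancel₀ hb'.ne' ?_⟩
  rw [hg, hg, hga]

namespace CantorSeries

variable (q ε : ℕ → ℕ)

noncomputable def prefixProd (n : ℕ) : ℝ := ∏ i ∈ range n, (q i : ℝ)

noncomputable def term (k : ℕ) : ℝ := ε k / prefixProd q (k + 1)

noncomputable def tail (n : ℕ) : ℝ := ∑' k, term q ε (n + k)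

/-- `remainder q ε n = ∑ₖ ε (n + k) / (q n ⋯ q (n + k))`, the value of the shifted series
(sequences are indexed from `0` here). -/
noncomputable def remainder (n : ℕ) : ℝ := prefixProd q n * tail q ε n

variable {q ε}

lemma prefixProd_pos (hq : ∀ k, 0 < q k) (n : ℕ) : 0 < prefixProd q n :=
  prod_pos fun i _ => Nat.cast_pos.2 (hq i)

lemma prefixProd_succ (n : ℕ) : prefixProd q (n + 1) = prefixProd q n * q n :=
  prod_range_succ _ _

lemma prefixProd_add (n m : ℕ) :
    prefixProd q (n + m) = prefixProd q n * ∏ i ∈ Ico n (n + m), (q i : ℝ) :=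
  (prod_range_mul_prod_Ico _ (Nat.le_add_right n m)).symm

lemma term_nonneg (k : ℕ) : 0 ≤ term q ε k :=
  div_nonneg (Nat.cast_nonneg _) (prod_nonneg fun _ _ => Nat.cast_nonneg _)

lemma term_le_sub (hε : ∀ k, ε k < q k) (k : ℕ) :
    term q ε k ≤ 1 / prefixProd q k - 1 / prefixProd q (k + 1) := by
  have hP := prefixProd_pos (fun i => Nat.zero_lt_of_lt (hε i)) k
  have hqk : (0 : ℝ) < q k := Nat.cast_pos.2 (Nat.zero_lt_of_lt (hε k))
  have hεq : (ε k : ℝ) ≤ q k - 1 := le_sub_iff_add_le.2 (by exact_mod_cast hε k)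
  rw [term, prefixProd_succ]
  calc (ε k : ℝ) / (prefixProd q k * q k) ≤ (q k - 1) / (prefixProd q k * q k) := by gcongr
    _ = 1 / prefixProd q k - 1 / (prefixProd q k * q k) := by field_simp

lemma sum_range_term_le (hε : ∀ k, ε k < q k) (n N : ℕ) :
    ∑ k ∈ range N, term q ε (n + k) ≤ 1 / prefixProd q n := by
  have hP := prefixProd_pos (fun i => Nat.zero_lt_of_lt (hε i)) (n + N)
  calc ∑ k ∈ range N, term q ε (n + k)
      ≤ ∑ k ∈ range N, (1 / prefixProd q (n + k) - 1 / prefixProd q (n + (k + 1))) :=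
        sum_le_sum fun k _ => term_le_sub hε (n + k)
    _ = 1 / prefixProd q n - 1 / prefixProd q (n + N) :=
        sum_range_sub' (fun k => 1 / prefixProd q (n + k)) N
    _ ≤ 1 / prefixProd q n := by linarith [one_div_pos.2 hP]

lemma summable_term_add (hε : ∀ k, ε k < q k) (n : ℕ) : Summable fun k => term q ε (n + k) :=
  summable_of_sum_range_le (fun _ => term_nonneg _) (sum_range_term_le hε n)

lemma tail_zero : tail q ε 0 = ∑' k, term q ε k := by
  simp only [tail, zero_add]

lemma tail_succ (hε : ∀ k, ε k < q k) (n : ℕ) :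
    tail q ε n = term q ε n + tail q ε (n + 1) := by
  rw [tail, (summable_term_add hε n).tsum_eq_zero_add, tail]
  simp only [add_zero, add_assoc, add_comm 1]

lemma remainder_zero : remainder q ε 0 = tail q ε 0 := by
  simp [remainder, prefixProd]

lemma remainder_nonneg (n : ℕ) : 0 ≤ remainder q ε n :=
  mul_nonneg (prod_nonneg fun _ _ => Nat.cast_nonneg _) (tsum_nonneg fun _ => term_nonneg _)

lemma remainder_le_one (hε : ∀ k, ε k < q k) (n : ℕ) : remainder q ε n ≤ 1 := by
  have hP := prefixProd_pos (fun i => Nat.zero_lt_of_lt (hε i)) n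
  have hT : tail q ε n ≤ 1 / prefixProd q n :=
    Real.tsum_le_of_sum_range_le (fun _ => term_nonneg _) (sum_range_term_le hε n)
  calc remainder q ε n ≤ prefixProd q n * (1 / prefixProd q n) := by
        unfold remainder; gcongr
    _ = 1 := by field_simp

lemma remainder_succ (hε : ∀ k, ε k < q k) (n : ℕ) :
    remainder q ε (n + 1) = q n * remainder q ε n - ε n := by
  have hP := prefixProd_pos (fun i => Nat.zero_lt_of_lt (hε i)) n
  have hqn : (0 : ℝ) < q n := Nat.cast_pos.2 (Nat.zero_lt_of_lt (hε n))
  rw [remainder, remainder, tail_succ hε n, term, prefixProd_succ]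
  field_simp
  ring

lemma exists_int_remainder_add (hε : ∀ k, ε k < q k) (n m : ℕ) :
    ∃ A : ℤ, remainder q ε (n + m) = (∏ i ∈ Ico n (n + m), (q i : ℝ)) * remainder q ε n - A := by
  induction m with
  | zero => exact ⟨0, by simp⟩
  | succ m ih =>
    obtain ⟨A, hA⟩ := ih
    refine ⟨q (n + m) * A + ε (n + m), ?_⟩
    rw [← add_assoc, remainder_succ hε, hA, prod_Ico_succ_top (Nat.le_add_right n m)]
    push_cast
    ring

lemma tail_eq_prod_mul_tail_iff (hq : ∀ k, 0 < q k) (n m : ℕ) :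
    tail q ε n = (∏ i ∈ Ico n (n + m), (q i : ℝ)) * tail q ε (n + m) ↔
      remainder q ε (n + m) = remainder q ε n := by
  rw [remainder, remainder, prefixProd_add, mul_assoc, eq_comm,
    mul_right_inj' (prefixProd_pos hq n).ne']

lemma exists_int_remainder_eq (hε : ∀ k, ε k < q k) (n : ℕ) :
    ∃ A : ℤ, remainder q ε n = prefixProd q n * remainder q ε 0 - A := by
  simpa [prefixProd, ← range_eq_Ico] using exists_int_remainder_add hε 0 n

lemma exists_remainder_eq_of_rat (hε : ∀ k, ε k < q k) (r : ℚ) (hr : remainder q ε 0 = r) :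
    ∃ a a', a < a' ∧ remainder q ε a = remainder q ε a' := by
  refine exists_lt_eq_of_mem_Icc_of_mul_mem_int r.den_pos
    (fun n => ⟨remainder_nonneg n, remainder_le_one hε n⟩) fun n => ?_
  obtain ⟨A, hA⟩ := exists_int_remainder_eq hε n
  have hr_num : (r.den : ℝ) * r = r.num := by exact_mod_cast r.den_mul_eq_num
  refine ⟨(∏ i ∈ range n, q i : ℕ) * r.num - r.den * A, ?_⟩
  rw [hA, hr]
  push_cast
  rw [show ∏ i ∈ range n, (q i : ℝ) = prefixProd q n from rfl]
  linear_combination prefixProd q n * hr_num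

lemma exists_rat_of_remainder_add_eq (hq : ∀ k, 2 ≤ q k) (hε : ∀ k, ε k < q k) {n m : ℕ}
    (hm : 0 < m) (h : remainder q ε (n + m) = remainder q ε n) :
    ∃ r : ℚ, remainder q ε 0 = r := by
  obtain ⟨A, hA⟩ := exists_int_remainder_add hε n m
  obtain ⟨B, hB⟩ := exists_int_remainder_eq hε n
  rw [← Nat.cast_prod] at hA
  set Q := ∏ i ∈ Ico n (n + m), q i
  have hQ : 2 ≤ Q := (hq n).trans <|
    single_le_prod' (fun i _ => (hq i).trans' one_le_two) (mem_Ico.2 ⟨le_rfl, by omega⟩)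
  have hQ1 : (Q : ℝ) - 1 ≠ 0 := sub_ne_zero.2 (by exact_mod_cast (by omega : Q ≠ 1))
  have hP := prefixProd_pos (fun i => Nat.zero_lt_of_lt (hε i)) n
  refine ⟨((A : ℚ) / (Q - 1) + B) / (∏ i ∈ range n, q i : ℕ), ?_⟩
  push_cast
  rw [show ∏ i ∈ range n, (q i : ℝ) = prefixProd q n from rfl]
  field_simp
  linear_combination -((Q : ℝ) - 1) * hB + h - hA

end CantorSeries

open CantorSeries in
theorem cantor_rational_iff_tail_eq_general
    (q ε : ℕ → ℕ) (hq : ∀ k, 2 ≤ q k) (hε : ∀ k, ε k < q k)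
    (x : ℝ)
    (hx : x = ∑' k : ℕ, (ε k : ℝ) / ∏ i ∈ Finset.range (k + 1), (q i : ℝ)) :
    (∃ r : ℚ, x = (r : ℝ)) ↔
      ∃ n m : ℕ, 0 < m ∧
        (∑' k : ℕ, (ε (n + k) : ℝ) / ∏ i ∈ Finset.range (n + k + 1), (q i : ℝ)) =
        (∏ i ∈ Finset.Ico n (n + m), (q i : ℝ)) *
          (∑' k : ℕ, (ε (n + m + k) : ℝ) / ∏ i ∈ Finset.range (n + m + k + 1), (q i : ℝ)) := by
  change (∃ r : ℚ, x = r) ↔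
    ∃ n m : ℕ, 0 < m ∧ tail q ε n = (∏ i ∈ Ico n (n + m), (q i : ℝ)) * tail q ε (n + m)
  have hx0 : x = remainder q ε 0 := by rw [remainder_zero, tail_zero]; exact hx
  simp only [hx0, tail_eq_prod_mul_tail_iff fun i => Nat.zero_lt_of_lt (hε i)]
  constructor
  · rintro ⟨r, hr⟩
    obtain ⟨a, a', haa', h⟩ := exists_remainder_eq_of_rat hε r hr
    exact ⟨a, a' - a, by omega, by rw [Nat.add_sub_cancel' haa'.le, h]⟩
  · rintro ⟨n, m, hm, h⟩
    exact exists_rat_of_remainder_add_eq hq hε hm h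

/-- (Serbenyuk) A number `x ∈ [0,1]` represented by the Cantor series
`x = ∑ ε_k / (q_1 ⋯ q_k)` is rational iff there exist `n ≥ 0`, `m ≥ 1` with
`∑_{k=n+1}^∞ ε_k/(q_1⋯q_k) = q_{n+1}⋯q_{n+m} ⬝ ∑_{k=n+m+1}^∞ ε_k/(q_1⋯q_k)`.
(Sequences are 0-indexed.) -/
theorem cantor_rational_iff_tail_eq
    (q ε : ℕ → ℕ) (hq : ∀ k, 2 ≤ q k) (hε : ∀ k, ε k < q k)
    (x : ℝ) (hmem : x ∈ Set.Icc (0 : ℝ) 1)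
    (hx : x = ∑' k : ℕ, (ε k : ℝ) / ∏ i ∈ Finset.range (k + 1), (q i : ℝ)) :
    (∃ r : ℚ, x = (r : ℝ)) ↔
      ∃ n m : ℕ, 0 < m ∧
        (∑' k : ℕ, (ε (n + k) : ℝ) / ∏ i ∈ Finset.range (n + k + 1), (q i : ℝ)) =
        (∏ i ∈ Finset.Ico n (n + m), (q i : ℝ)) *
          (∑' k : ℕ, (ε (n + m + k) : ℝ) / ∏ i ∈ Finset.range (n + m + k + 1), (q i : ℝ)) :=
  cantor_rational_iff_tail_eq_general q ε hq hε x hx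
end

section
/- Let p be an integer and r a positive integer with gcd(p,r) = 1, and suppose the rational number x = p/r is representable by an alternating Cantor series x = ∑_{n=1}^∞ (−1)^n ε_n/(q_1 q_2 ⋯ q_n). Then x admits a finite expansion by this series (i.e., a representation with ε_n = 0 for all sufficiently large n) if and only if there exists a positive integer n_0 such that r divides q_1 q_2 ⋯ q_{n_0}. -/
/-!
Write `Q N = q 0 ⋯ q (N-1)`. The series splits into its first `N` terms, an integer over `Q N`,
plus `±1 / Q N` times the alternating Cantor series of the shifted sequences. Every such series
has absolute value at most `1` by telescoping, and strictly less than `1` because its first two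
digits carry opposite signs. Hence if `x * Q N` is an integer the tail vanishes and truncating the
digits at `N` gives a finite expansion; conversely a finite expansion writes `x = S / Q N`, and
since `p` and `r` are coprime, `r ∣ Q N`.
-/

open Finset

section AltCantor

variable (q ε : ℕ → ℕ)

noncomputable def altCantorTerm (n : ℕ) : ℝ :=
  (-1) ^ (n + 1) * (ε n : ℝ) / ∏ i ∈ range (n + 1), (q i : ℝ)

noncomputable def altCantorSeries : ℝ := ∑' n, altCantorTerm q ε n

variable {q ε}

lemma abs_altCantorTerm_le (hq : ∀ k, 0 < q k) (hε : ∀ n, ε n < q n) (n : ℕ) :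
    |altCantorTerm q ε n| ≤
      1 / ∏ i ∈ range n, (q i : ℝ) - 1 / ∏ i ∈ range (n + 1), (q i : ℝ) := by
  have hQ : 0 < ∏ i ∈ range n, (q i : ℝ) := prod_pos fun i _ => by exact_mod_cast hq i
  have hqn : (0 : ℝ) < q n := by exact_mod_cast hq n
  have hεn : (ε n : ℝ) ≤ q n - 1 := by
    have : (ε n : ℝ) + 1 ≤ q n := by exact_mod_cast hε n
    linarith
  have hdiff : 1 / ∏ i ∈ range n, (q i : ℝ) - 1 / ∏ i ∈ range (n + 1), (q i : ℝ) =
      (q n - 1) / ∏ i ∈ range (n + 1), (q i : ℝ) := by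
    rw [prod_range_succ]; field_simp
  rw [hdiff, altCantorTerm, abs_div, abs_mul, abs_pow, abs_neg, abs_one, one_pow, one_mul,
    Nat.abs_cast, abs_of_pos (by rw [prod_range_succ]; positivity)]
  gcongr

lemma sum_range_abs_altCantorTerm_le_one (hq : ∀ k, 0 < q k) (hε : ∀ n, ε n < q n) (N : ℕ) :
    ∑ n ∈ range N, |altCantorTerm q ε n| ≤ 1 := by
  calc ∑ n ∈ range N, |altCantorTerm q ε n|
      ≤ ∑ n ∈ range N,
          (1 / ∏ i ∈ range n, (q i : ℝ) - 1 / ∏ i ∈ range (n + 1), (q i : ℝ)) :=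
        sum_le_sum fun n _ => abs_altCantorTerm_le hq hε n
    _ = 1 - 1 / ∏ i ∈ range N, (q i : ℝ) := by
        rw [sum_range_sub' (fun n => 1 / ∏ i ∈ range n, (q i : ℝ))]; simp
    _ ≤ 1 := sub_le_self _ (one_div_nonneg.2 (prod_nonneg fun i _ => Nat.cast_nonneg _))

lemma summable_altCantorTerm (hq : ∀ k, 0 < q k) (hε : ∀ n, ε n < q n) :
    Summable (altCantorTerm q ε) :=
  Summable.of_abs <| summable_of_sum_range_le (c := 1) (fun _ => abs_nonneg _)
    (sum_range_abs_altCantorTerm_le_one hq hε)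

lemma abs_altCantorSeries_le_one (hq : ∀ k, 0 < q k) (hε : ∀ n, ε n < q n) :
    |altCantorSeries q ε| ≤ 1 := by
  have habs : Summable fun n => ‖altCantorTerm q ε n‖ := (summable_altCantorTerm hq hε).norm
  have hle : ∑' n, ‖altCantorTerm q ε n‖ ≤ 1 :=
    Real.tsum_le_of_sum_range_le (fun _ => norm_nonneg _)
      (sum_range_abs_altCantorTerm_le_one hq hε)
  exact (norm_tsum_le_tsum_norm habs).trans hle

lemma altCantorSeries_eq_sum_add_tail (hq : ∀ k, 0 < q k) (hε : ∀ n, ε n < q n) (N : ℕ) :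
    altCantorSeries q ε = ∑ n ∈ range N, altCantorTerm q ε n +
      (-1) ^ N * altCantorSeries (fun i => q (i + N)) (fun i => ε (i + N)) /
        ∏ i ∈ range N, (q i : ℝ) := by
  have hshift (n : ℕ) : altCantorTerm q ε (n + N) = (-1) ^ N / (∏ i ∈ range N, (q i : ℝ)) *
      altCantorTerm (fun i => q (i + N)) (fun i => ε (i + N)) n := by
    rw [altCantorTerm, altCantorTerm, show n + N + 1 = N + (n + 1) by ring,
      prod_range_add (fun i => (q i : ℝ)) N (n + 1)]
    simp only [add_comm _ N, pow_add]
    field_simp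
  rw [altCantorSeries, altCantorSeries, ← (summable_altCantorTerm hq hε).sum_add_tsum_nat_add N,
    funext hshift, tsum_mul_left]
  ring

lemma abs_altCantorSeries_lt_one (hq : ∀ k, 2 ≤ q k) (hε : ∀ n, ε n < q n) :
    |altCantorSeries q ε| < 1 := by
  have hq₀ : ∀ k, 0 < q k := fun k => zero_lt_two.trans_le (hq k)
  have hdigit (n : ℕ) : (ε n : ℝ) + 1 ≤ q n := by exact_mod_cast hε n
  have hq0 : (2 : ℝ) ≤ q 0 := by exact_mod_cast hq 0
  have hq1 : (2 : ℝ) ≤ q 1 := by exact_mod_cast hq 1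
  have htail := abs_altCantorSeries_le_one (q := fun i => q (i + 2)) (ε := fun i => ε (i + 2))
    (fun k => hq₀ _) (fun n => hε _)
  rw [altCantorSeries_eq_sum_add_tail hq₀ hε 2]
  set W := altCantorSeries (fun i => q (i + 2)) (fun i => ε (i + 2))
  simp only [sum_range_succ, sum_range_zero, altCantorTerm, prod_range_succ, prod_range_zero]
  obtain ⟨hWl, hWu⟩ := abs_le.1 htail
  have hform : 0 + (-1) ^ (0 + 1) * (ε 0 : ℝ) / (1 * q 0) +
      (-1) ^ (1 + 1) * (ε 1 : ℝ) / (1 * q 0 * q 1) + (-1) ^ 2 * W / (1 * q 0 * q 1) =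
        (-ε 0 * q 1 + ε 1 + W) / (q 0 * q 1) := by
    field_simp; ring
  -- the numerator lies in `[-(q 0 - 1) * q 1 - 1, q 1]`, strictly inside `(-q 0 * q 1, q 0 * q 1)`
  rw [hform, abs_lt, lt_div_iff₀ (by positivity), div_lt_iff₀ (by positivity)]
  constructor <;> nlinarith [hdigit 0, hdigit 1]

lemma exists_int_sum_altCantorTerm_mul_prod (hq : ∀ k, 0 < q k) (N : ℕ) :
    ∃ S : ℤ,
      (∑ n ∈ range N, altCantorTerm q ε n) * ∏ i ∈ range N, (q i : ℝ) = S := by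
  induction N with
  | zero => exact ⟨0, by simp⟩
  | succ N ih =>
    obtain ⟨S, hS⟩ := ih
    have hQ : ∏ i ∈ range N, (q i : ℝ) ≠ 0 :=
      prod_ne_zero_iff.2 fun i _ => by exact_mod_cast (hq i).ne'
    have hqN : (q N : ℝ) ≠ 0 := by exact_mod_cast (hq N).ne'
    refine ⟨S * q N + (-1) ^ (N + 1) * ε N, ?_⟩
    rw [sum_range_succ, add_mul, prod_range_succ, ← mul_assoc, hS, altCantorTerm, prod_range_succ]
    push_cast
    field_simp

lemma altCantorSeries_eq_sum_range {N : ℕ} (h : ∀ n ≥ N, ε n = 0) :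
    altCantorSeries q ε = ∑ n ∈ range N, altCantorTerm q ε n :=
  tsum_eq_sum fun n hn => by simp [altCantorTerm, h n (by simpa using hn)]

lemma altCantorSeries_eq_sum_range_of_mul_prod_eq_int (hq : ∀ k, 2 ≤ q k)
    (hε : ∀ n, ε n < q n) {N : ℕ} {v : ℤ}
    (hv : altCantorSeries q ε * ∏ i ∈ range N, (q i : ℝ) = v) :
    altCantorSeries q ε = ∑ n ∈ range N, altCantorTerm q ε n := by
  have hq₀ : ∀ k, 0 < q k := fun k => zero_lt_two.trans_le (hq k)
  have hQ : ∏ i ∈ range N, (q i : ℝ) ≠ 0 :=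
    prod_ne_zero_iff.2 fun i _ => by exact_mod_cast (hq₀ i).ne'
  obtain ⟨S, hS⟩ := exists_int_sum_altCantorTerm_mul_prod (ε := ε) hq₀ N
  have hsplit := altCantorSeries_eq_sum_add_tail hq₀ hε N
  set W := altCantorSeries (fun i => q (i + N)) (fun i => ε (i + N))
  have hvS : ((v - S : ℤ) : ℝ) = (-1) ^ N * W := by
    rw [Int.cast_sub, ← hv, ← hS, hsplit]; field_simp; ring
  have hW : |W| < 1 := abs_altCantorSeries_lt_one (fun k => hq _) (fun n => hε _)
  have hvS0 : v - S = 0 := by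
    rw [← Int.abs_lt_one_iff, ← Int.cast_lt (R := ℝ), Int.cast_abs, hvS]
    simpa [abs_mul] using hW
  rw [hsplit, show W = 0 by simpa [hvS0] using hvS.symm]
  simp

lemma dvd_of_div_mul_eq_int {p S : ℤ} {r Q : ℕ} (hr : 0 < r) (hpr : Int.gcd p r = 1)
    (h : (p : ℝ) / r * Q = S) : r ∣ Q := by
  have hcross : p * Q = S * r := by
    have : (p : ℝ) * Q = S * r := by rw [← h]; field_simp
    exact_mod_cast this
  have : (r : ℤ) ∣ p * Q := ⟨S, by rw [hcross, mul_comm]⟩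
  exact Int.natCast_dvd_natCast.1 <|
    (Int.isCoprime_iff_gcd_eq_one.2 (Int.gcd_comm _ _ ▸ hpr)).dvd_of_dvd_mul_left this

end AltCantor

/-- (Serbenyuk) Suppose the rational number `x = p/r` (with `gcd(p,r)=1`,
`r ≥ 1`) is representable by an alternating Cantor series
`x = ∑_{n=1}^∞ (−1)^n ε_n / (q_1 ⋯ q_n)`. Then `x` has a finite expansion by such a series
(digits eventually `0`) iff there is `n₀ ≥ 1` with `r ∣ q_1 q_2 ⋯ q_{n₀}`.
(Sequences are 0-indexed, so the sign of the term of index `n : ℕ` is `(−1)^{n+1}`.) -/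
theorem alternating_cantor_finite_expansion_iff
    (q : ℕ → ℕ) (hq : ∀ k, 2 ≤ q k)
    (p : ℤ) (r : ℕ) (hr : 0 < r) (hpr : Int.gcd p (r : ℤ) = 1)
    (x : ℝ) (hx : x = (p : ℝ) / (r : ℝ))
    (hrep : ∃ ε : ℕ → ℕ, (∀ n, ε n < q n) ∧
      x = ∑' n : ℕ, ((-1 : ℝ) ^ (n + 1) * (ε n : ℝ)) / ∏ i ∈ Finset.range (n + 1), (q i : ℝ)) :
    (∃ ε : ℕ → ℕ, (∀ n, ε n < q n) ∧ (∃ N : ℕ, ∀ n ≥ N, ε n = 0) ∧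
      x = ∑' n : ℕ, ((-1 : ℝ) ^ (n + 1) * (ε n : ℝ)) / ∏ i ∈ Finset.range (n + 1), (q i : ℝ)) ↔
      ∃ n₀ : ℕ, 0 < n₀ ∧ r ∣ ∏ i ∈ Finset.range n₀, q i := by
  have hq₀ : ∀ k, 0 < q k := fun k => zero_lt_two.trans_le (hq k)
  change (∃ ε : ℕ → ℕ, (∀ n, ε n < q n) ∧ (∃ N : ℕ, ∀ n ≥ N, ε n = 0) ∧
    x = altCantorSeries q ε) ↔ _
  constructor
  · rintro ⟨ε, -, ⟨N, hN⟩, rfl⟩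
    obtain ⟨S, hS⟩ := exists_int_sum_altCantorTerm_mul_prod (ε := ε) hq₀ N
    rw [← altCantorSeries_eq_sum_range hN, hx] at hS
    refine ⟨N + 1, N.succ_pos, prod_range_succ q N ▸ dvd_mul_of_dvd_left ?_ _⟩
    exact dvd_of_div_mul_eq_int hr hpr (by exact_mod_cast hS)
  · rintro ⟨N, -, c, hc⟩
    obtain ⟨ε, hε, hxε⟩ := hrep
    change x = altCantorSeries q ε at hxε
    have hv : altCantorSeries q ε * ∏ i ∈ range N, (q i : ℝ) = (p * c : ℤ) := by
      rw [← hxε, hx, ← Nat.cast_prod, hc]; push_cast; field_simp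
    refine ⟨fun n => if n < N then ε n else 0, fun n => ?_,
      ⟨N, fun n hn => if_neg (by omega)⟩, ?_⟩
    · dsimp only
      split_ifs
      exacts [hε n, hq₀ n]
    · rw [hxε, altCantorSeries_eq_sum_range_of_mul_prod_eq_int hq hε hv,
        altCantorSeries_eq_sum_range (N := N) (fun n hn => if_neg (by omega))]
      exact sum_congr rfl fun n hn => by simp [altCantorTerm, mem_range.1 hn]
end

section
/- Let x be given by an alternating Cantor series representation x = ∑_{n=1}^∞ (−1)^n ε_n/(q_1 q_2 ⋯ q_n). Then x is a rational number if and only if there exist integers k and t with 0 ≤ k < t such that φ̂^k(x) = φ̂^t(x), where φ̂^k(x) = ∑_{n=k+1}^∞ (−1)^{n−k} ε_n/(q_{k+1} q_{k+2} ⋯ q_n). -/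
/-!
Write `φ̂^k` for the shift of the series. Splitting off the first term gives the recurrence
`φ̂^{k+1} = -ε_k - q_k φ̂^k`, with integer coefficients and `|q_k| ≥ 2`.

If `x = φ̂^0` is rational with denominator `d`, the recurrence keeps every `d φ̂^k` an integer,
and these integers are bounded because `|φ̂^k| ≤ 2`; by pigeonhole two of them coincide.

Conversely, iterating the recurrence gives `φ̂^t = a + b φ̂^k` with integers `a, b` and
`|b| ≥ 2^{t-k} ≥ 2`, so `φ̂^k = φ̂^t` forces `φ̂^k = a / (1 - b)` to be rational; the recurrence
then carries rationality back down to `φ̂^0 = x`.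
-/

open Finset

noncomputable section

namespace AlternatingCantor

/-- The `j`-th term of the series defining the shift `φ̂^k`, with `n = k + 1 + j`. -/
def term (q ε : ℕ → ℕ) (k j : ℕ) : ℝ :=
  ((-1 : ℝ) ^ (j + 1) * (ε (k + j) : ℝ)) / ∏ i ∈ Ico k (k + j + 1), (q i : ℝ)

def shift (q ε : ℕ → ℕ) (k : ℕ) : ℝ :=
  ∑' j, term q ε k j

variable {q ε : ℕ → ℕ}

lemma two_pow_le_prod_Ico (hq : ∀ k, 2 ≤ q k) (a j : ℕ) :
    (2 : ℝ) ^ j ≤ ∏ i ∈ Ico a (a + j), (q i : ℝ) := by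
  have h := pow_card_le_prod (Ico a (a + j)) (fun i => q i) 2 fun i _ => hq i
  rw [Nat.card_Ico, Nat.add_sub_cancel_left] at h
  exact_mod_cast h

lemma abs_term_le (hq : ∀ k, 2 ≤ q k) (hε : ∀ k, ε k < q k) (k j : ℕ) :
    |term q ε k j| ≤ (1 / 2) ^ j := by
  have hP := two_pow_le_prod_Ico hq k j
  have hPpos : (0 : ℝ) < ∏ i ∈ Ico k (k + j), (q i : ℝ) := lt_of_lt_of_le (by positivity) hP
  have hqpos : (0 : ℝ) < q (k + j) := by exact_mod_cast (Nat.zero_le _).trans_lt (hε (k + j))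
  have hεq : (ε (k + j) : ℝ) ≤ q (k + j) := by exact_mod_cast (hε (k + j)).le
  rw [term, prod_Ico_succ_top (Nat.le_add_right k j), abs_div, abs_mul, abs_pow, abs_neg,
    abs_one, one_pow, one_mul, Nat.abs_cast, abs_of_pos (by positivity), one_div, inv_pow,
    div_le_iff₀ (by positivity)]
  calc (ε (k + j) : ℝ) ≤ q (k + j) := hεq
    _ ≤ ((2 : ℝ) ^ j)⁻¹ * (∏ i ∈ Ico k (k + j), (q i : ℝ)) * q (k + j) := by
      rw [← div_eq_inv_mul, le_mul_iff_one_le_left hqpos, one_le_div (by positivity)]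
      exact hP
    _ = _ := by ring

lemma summable_term (hq : ∀ k, 2 ≤ q k) (hε : ∀ k, ε k < q k) (k : ℕ) :
    Summable (term q ε k) :=
  Summable.of_norm_bounded (summable_geometric_of_lt_one (by norm_num) (by norm_num))
    fun j => abs_term_le hq hε k j

lemma abs_shift_le_two (hq : ∀ k, 2 ≤ q k) (hε : ∀ k, ε k < q k) (k : ℕ) :
    |shift q ε k| ≤ 2 :=
  tsum_of_norm_bounded (f := term q ε k) hasSum_geometric_two fun j => abs_term_le hq hε k j

lemma term_succ (k j : ℕ) :
    term q ε k (j + 1) = -(q k : ℝ)⁻¹ * term q ε (k + 1) j := by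
  rw [term, term, prod_eq_prod_Ico_succ_bot (by omega), show k + (j + 1) = k + 1 + j by omega]
  ring

lemma shift_succ (hq : ∀ k, 2 ≤ q k) (hε : ∀ k, ε k < q k) (k : ℕ) :
    shift q ε (k + 1) = -(ε k : ℝ) - q k * shift q ε k := by
  have hq0 : (q k : ℝ) ≠ 0 := by have := hq k; positivity
  have hsplit : shift q ε k = -(ε k : ℝ) / q k - (q k : ℝ)⁻¹ * shift q ε (k + 1) := by
    rw [shift, (summable_term hq hε k).tsum_eq_zero_add, tsum_congr (term_succ k), tsum_mul_left,
      shift, term, Nat.Ico_succ_singleton]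
    simp only [zero_add, pow_one, add_zero, prod_singleton]
    ring
  rw [hsplit]
  field_simp
  ring

lemma exists_shift_eq_of_rat (hq : ∀ k, 2 ≤ q k) (hε : ∀ k, ε k < q k)
    {r : ℚ} (hr : shift q ε 0 = r) (k : ℕ) : ∃ z : ℤ, (r.den : ℝ) * shift q ε k = z := by
  induction k with
  | zero => exact ⟨r.num, by rw [hr, mul_comm]; exact_mod_cast r.mul_den_eq_num⟩
  | succ k ih =>
    obtain ⟨z, hz⟩ := ih
    refine ⟨-(ε k * r.den : ℤ) - q k * z, ?_⟩
    rw [shift_succ hq hε]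
    push_cast
    rw [← hz]
    ring

lemma exists_lt_shift_eq_of_rat (hq : ∀ k, 2 ≤ q k) (hε : ∀ k, ε k < q k)
    {r : ℚ} (hr : shift q ε 0 = r) : ∃ k t, k < t ∧ shift q ε k = shift q ε t := by
  have hd : (0 : ℝ) < r.den := by positivity
  choose z hz using exists_shift_eq_of_rat hq hε hr
  have hbound : ∀ k, z k ∈ Set.Icc (-(2 * r.den : ℤ)) (2 * r.den) := by
    intro k
    have h : |(z k : ℝ)| ≤ 2 * r.den := by
      rw [← hz, abs_mul, abs_of_pos hd, mul_comm]
      exact mul_le_mul_of_nonneg_right (abs_shift_le_two hq hε k) hd.le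
    rw [Set.mem_Icc, ← abs_le]
    exact_mod_cast h
  obtain ⟨k, t, hkt, hzkt⟩ := Set.Finite.exists_lt_map_eq_of_forall_mem hbound (Set.finite_Icc _ _)
  exact ⟨k, t, hkt, mul_left_cancel₀ hd.ne' (by rw [hz, hz, hzkt])⟩

lemma exists_shift_add_eq (hq : ∀ k, 2 ≤ q k) (hε : ∀ k, ε k < q k) (k m : ℕ) :
    ∃ a b : ℤ, 2 ^ m ≤ |b| ∧ shift q ε (k + m) = a + b * shift q ε k := by
  induction m with
  | zero => exact ⟨0, 1, by simp, by simp⟩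
  | succ m ih =>
    obtain ⟨a, b, hb, hab⟩ := ih
    refine ⟨-ε (k + m) - q (k + m) * a, -q (k + m) * b, ?_, ?_⟩
    · rw [abs_mul, abs_neg, Nat.abs_cast, pow_succ']
      exact mul_le_mul (by exact_mod_cast hq (k + m)) hb (by positivity) (by positivity)
    · rw [← add_assoc, shift_succ hq hε, hab]
      push_cast
      ring

lemma rat_of_shift_eq (hq : ∀ k, 2 ≤ q k) (hε : ∀ k, ε k < q k)
    {k t : ℕ} (hkt : k < t) (h : shift q ε k = shift q ε t) : ∃ r : ℚ, shift q ε k = r := by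
  obtain ⟨a, b, hb, hab⟩ := exists_shift_add_eq hq hε k (t - k)
  rw [Nat.add_sub_cancel' hkt.le, ← h] at hab
  have hb1 : (1 : ℝ) - b ≠ 0 := by
    have : (2 : ℤ) ≤ |b| := le_trans (le_self_pow₀ (by norm_num) (by omega)) hb
    have : b ≠ 1 := by rintro rfl; norm_num at this
    rw [sub_ne_zero, ne_comm]
    exact_mod_cast this
  exact ⟨a / (1 - b), by push_cast; rw [eq_div_iff hb1]; linarith⟩

lemma rat_shift_succ_iff (hq : ∀ k, 2 ≤ q k) (hε : ∀ k, ε k < q k) (k : ℕ) :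
    (∃ r : ℚ, shift q ε (k + 1) = r) ↔ ∃ r : ℚ, shift q ε k = r := by
  have hq0 : (q k : ℝ) ≠ 0 := by have := hq k; positivity
  rw [shift_succ hq hε]
  constructor
  · rintro ⟨r, hr⟩
    exact ⟨(-ε k - r) / q k, by push_cast; rw [eq_div_iff hq0]; linarith⟩
  · rintro ⟨r, hr⟩
    exact ⟨-ε k - q k * r, by rw [hr]; push_cast; ring⟩

lemma rat_shift_zero_iff (hq : ∀ k, 2 ≤ q k) (hε : ∀ k, ε k < q k) (k : ℕ) :
    (∃ r : ℚ, shift q ε 0 = r) ↔ ∃ r : ℚ, shift q ε k = r := by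
  induction k with
  | zero => rfl
  | succ k ih => rw [ih, rat_shift_succ_iff hq hε]

end AlternatingCantor

end

open AlternatingCantor in
/-- (Serbenyuk) A number `x` represented by an alternating Cantor series
`x = ∑_{n=1}^∞ (−1)^n ε_n / (q_1 ⋯ q_n)` is rational iff there exist `0 ≤ k < t` with
`φ̂^k(x) = φ̂^t(x)`, where `φ̂^k(x) = ∑_{n=k+1}^∞ (−1)^{n−k} ε_n / (q_{k+1} ⋯ q_n)`.
(Sequences are 0-indexed: with `n = k + 1 + j`, the sign `(−1)^{n−k}` becomes `(−1)^{j+1}`.) -/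
theorem alternating_cantor_rational_iff_shift_eq
    (q ε : ℕ → ℕ) (hq : ∀ k, 2 ≤ q k) (hε : ∀ k, ε k < q k)
    (x : ℝ)
    (hx : x = ∑' n : ℕ, ((-1 : ℝ) ^ (n + 1) * (ε n : ℝ)) / ∏ i ∈ Finset.range (n + 1), (q i : ℝ)) :
    (∃ r : ℚ, x = (r : ℝ)) ↔
      ∃ k t : ℕ, k < t ∧
        (∑' j : ℕ, ((-1 : ℝ) ^ (j + 1) * (ε (k + j) : ℝ)) /
            ∏ i ∈ Finset.Ico k (k + j + 1), (q i : ℝ)) =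
        (∑' j : ℕ, ((-1 : ℝ) ^ (j + 1) * (ε (t + j) : ℝ)) /
            ∏ i ∈ Finset.Ico t (t + j + 1), (q i : ℝ)) := by
  have hx0 : x = shift q ε 0 := by
    simp only [hx, shift, term, Finset.range_eq_Ico, zero_add]
  rw [hx0]
  constructor
  · rintro ⟨r, hr⟩
    exact exists_lt_shift_eq_of_rat hq hε hr
  · rintro ⟨k, t, hkt, h⟩
    exact (rat_shift_zero_iff hq hε k).2 (rat_of_shift_eq hq hε hkt h)
end

section
/- Let x be given by an alternating Cantor series representation x = ∑_{n=1}^∞ (−1)^n ε_n/(q_1 q_2 ⋯ q_n). Then x is a rational number if and only if there exist integers k and t with 0 ≤ k < t such that ∑_{n=k+1}^∞ (−1)^n ε_n/(q_1 q_2 ⋯ q_n) = (−1)^{t−k} q_{k+1} q_{k+2} ⋯ q_t · ∑_{n=t+1}^∞ (−1)^n ε_n/(q_1 q_2 ⋯ q_n). -/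
/-!
Put `s n = (-1)^n q₀ ⋯ q_{n-1} · ∑_{m ≥ n} (-1)^(m+1) ε_m / (q₀ ⋯ q_m)`, so that `s 0 = x`,
`s (n+1) = -ε n - q n · s n` and `|s n| ≤ 2`; the tail identity for `(k, t)` says exactly
`s k = s t`. If `x` is rational with denominator `d`, every `s n` lies in the finite set
`d⁻¹ℤ ∩ [-2, 2]`, so two of them coincide. Conversely `s t = A · s k + B` with integers `B` and
`A = ± q_k ⋯ q_{t-1}`, `|A| ≥ 2`, so `s k = s t` gives `s k = B / (1 - A) ∈ ℚ`, and `s 0` is obtained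
from `s k` by inverting an integer affine map with nonzero slope.
-/

open Finset

section IntAffineRecurrence

variable {v : ℕ → ℝ} {a b : ℕ → ℤ}

theorem exists_int_affine_of_recurrence (hv : ∀ n, v (n + 1) = a n + b n * v n) (k m : ℕ) :
    ∃ B : ℤ, v (k + m) = ((∏ i ∈ Ico k (k + m), b i : ℤ) : ℝ) * v k + B := by
  induction m with
  | zero => exact ⟨0, by simp⟩
  | succ m ih =>
    obtain ⟨B, hB⟩ := ih
    refine ⟨a (k + m) + b (k + m) * B, ?_⟩
    rw [← add_assoc, hv, hB, prod_Ico_succ_top (Nat.le_add_right k m)]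
    push_cast
    ring

theorem exists_lt_eq_of_recurrence_of_bounded (hv : ∀ n, v (n + 1) = a n + b n * v n)
    {C : ℝ} (hC : ∀ n, |v n| ≤ C) {r : ℚ} (h0 : v 0 = r) : ∃ k t, k < t ∧ v k = v t := by
  have hd : (0 : ℝ) < r.den := by positivity
  have hint : ∀ n, ∃ z : ℤ, v n = z / r.den := fun n => by
    obtain ⟨B, hB⟩ := exists_int_affine_of_recurrence hv 0 n
    refine ⟨(∏ i ∈ Ico 0 n, b i) * r.num + B * r.den, ?_⟩
    rw [zero_add, h0, ← Rat.num_div_den r] at hB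
    rw [hB]
    push_cast
    field_simp
  set N : ℤ := ⌈C * r.den⌉
  have hrange : ∀ n, v n ∈ (fun z : ℤ => (z : ℝ) / r.den) '' Set.Icc (-N) N := fun n => by
    obtain ⟨z, hz⟩ := hint n
    have hzC : |(z : ℝ)| ≤ N := by
      calc |(z : ℝ)| = |v n| * r.den := by rw [hz, abs_div, abs_of_pos hd, div_mul_cancel₀ _ hd.ne']
        _ ≤ C * r.den := by gcongr; exact hC n
        _ ≤ N := Int.le_ceil _
    exact ⟨z, abs_le.mp (by exact_mod_cast hzC), hz.symm⟩
  exact ((Set.finite_Icc _ _).image _).exists_lt_map_eq_of_forall_mem hrange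

theorem exists_rat_eq_of_recurrence_of_eq (hv : ∀ n, v (n + 1) = a n + b n * v n)
    (hb : ∀ n, 2 ≤ |b n|) {k t : ℕ} (hkt : k < t) (h : v k = v t) : ∃ r : ℚ, v 0 = r := by
  have hb0 : ∀ n, b n ≠ 0 := fun n hn => by simpa [hn] using hb n
  obtain ⟨B, hB⟩ := exists_int_affine_of_recurrence hv k (t - k)
  rw [Nat.add_sub_cancel' hkt.le, ← h] at hB
  set A := ∏ i ∈ Ico k t, b i
  have hA : (1 : ℝ) - A ≠ 0 := by
    rw [sub_ne_zero, ne_comm]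
    have hA1 : A ≠ 1 := fun hA1 => by
      have hunit : IsUnit (b k) := isUnit_of_dvd_one (hA1 ▸ dvd_prod_of_mem b (by simpa using hkt))
      linarith [hb k, Int.isUnit_iff_abs_eq.mp hunit]
    exact_mod_cast hA1
  obtain ⟨B', hB'⟩ := exists_int_affine_of_recurrence hv 0 k
  rw [zero_add] at hB'
  set A' := ∏ i ∈ Ico 0 k, b i
  have hA' : (A' : ℝ) ≠ 0 := by exact_mod_cast prod_ne_zero_iff.mpr fun i _ => hb0 i
  refine ⟨(B / (1 - A) - B') / A', ?_⟩
  have hvk : v k = B / (1 - A) := by rw [eq_div_iff hA]; linarith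
  push_cast
  rw [← hvk, eq_div_iff hA', hB']
  ring

end IntAffineRecurrence

namespace AlternatingCantorSeries

variable (q ε : ℕ → ℕ)

/-- `q₀ ⋯ q_{n-1}`; the paper's `q₁ ⋯ q_n` with 0-based indices. -/
noncomputable def den (n : ℕ) : ℝ := ∏ i ∈ range n, (q i : ℝ)

noncomputable def term (m : ℕ) : ℝ := (-1) ^ (m + 1) * (ε m : ℝ) / den q (m + 1)

noncomputable def tail (n : ℕ) : ℝ := ∑' j, term q ε (n + j)

noncomputable def scaledTail (n : ℕ) : ℝ := (-1) ^ n * den q n * tail q ε n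

variable {q ε}

theorem den_succ (n : ℕ) : den q (n + 1) = den q n * q n := prod_range_succ _ _

theorem den_pos (hq : ∀ i, 0 < q i) (n : ℕ) : 0 < den q n :=
  prod_pos fun i _ => Nat.cast_pos.mpr (hq i)

theorem den_eq_den_mul_prod_Ico {k t : ℕ} (hkt : k ≤ t) :
    den q t = den q k * ∏ i ∈ Ico k t, (q i : ℝ) :=
  (prod_range_mul_prod_Ico _ hkt).symm

theorem two_pow_mul_den_le (hq : ∀ i, 2 ≤ q i) (n j : ℕ) : 2 ^ j * den q n ≤ den q (n + j) := by
  induction j with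
  | zero => simp
  | succ j ih =>
    have hqj : (2 : ℝ) ≤ q (n + j) := by exact_mod_cast hq (n + j)
    rw [← add_assoc, den_succ, pow_succ, mul_right_comm]
    exact mul_le_mul ih hqj zero_le_two (den_pos (fun i => zero_lt_two.trans_le (hq i)) _).le

theorem abs_term_le (hε : ∀ i, ε i < q i) (m : ℕ) : |term q ε m| ≤ 1 / den q m := by
  have hq : ∀ i, 0 < q i := fun i => (Nat.zero_le _).trans_lt (hε i)
  have hden := den_pos hq m
  have hqm : (0 : ℝ) < q m := by exact_mod_cast hq m
  have hεq : (ε m : ℝ) + 1 ≤ q m := by exact_mod_cast hε m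
  rw [term, den_succ, abs_div, abs_mul, abs_pow, abs_neg, abs_one, one_pow, one_mul,
    Nat.abs_cast, abs_of_pos (by positivity), div_le_div_iff₀ (by positivity) hden]
  nlinarith

theorem abs_term_add_le (hq : ∀ i, 2 ≤ q i) (hε : ∀ i, ε i < q i) (n j : ℕ) :
    |term q ε (n + j)| ≤ (1 / 2) ^ j / den q n := by
  have hden := den_pos (fun i => zero_lt_two.trans_le (hq i)) n
  calc |term q ε (n + j)| ≤ 1 / den q (n + j) := abs_term_le hε _
    _ ≤ 1 / (2 ^ j * den q n) := by gcongr; exact two_pow_mul_den_le hq n j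
    _ = (1 / 2) ^ j / den q n := by rw [one_div_pow, div_div]

theorem summable_abs_term_add (hq : ∀ i, 2 ≤ q i) (hε : ∀ i, ε i < q i) (n : ℕ) :
    Summable fun j => |term q ε (n + j)| :=
  (summable_geometric_two.div_const _).of_nonneg_of_le (fun _ => abs_nonneg _)
    (abs_term_add_le hq hε n)

theorem abs_tail_le (hq : ∀ i, 2 ≤ q i) (hε : ∀ i, ε i < q i) (n : ℕ) :
    |tail q ε n| ≤ 2 / den q n := by
  calc |tail q ε n| ≤ ∑' j, |term q ε (n + j)| := by
        simpa only [Real.norm_eq_abs, tail] using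
          norm_tsum_le_tsum_norm (f := fun j => term q ε (n + j))
            (by simpa only [Real.norm_eq_abs] using summable_abs_term_add hq hε n)
    _ ≤ ∑' j, (1 / 2 : ℝ) ^ j / den q n :=
        (summable_abs_term_add hq hε n).tsum_le_tsum (abs_term_add_le hq hε n)
          (summable_geometric_two.div_const _)
    _ = 2 / den q n := by rw [tsum_div_const, tsum_geometric_two]

theorem abs_scaledTail_le (hq : ∀ i, 2 ≤ q i) (hε : ∀ i, ε i < q i) (n : ℕ) :
    |scaledTail q ε n| ≤ 2 := by
  have hden := den_pos (fun i => zero_lt_two.trans_le (hq i)) n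
  rw [scaledTail, abs_mul, abs_mul, abs_pow, abs_neg, abs_one, one_pow, one_mul, abs_of_pos hden,
    ← le_div_iff₀' hden]
  exact abs_tail_le hq hε n

theorem tail_eq_term_add_tail_succ (hq : ∀ i, 2 ≤ q i) (hε : ∀ i, ε i < q i) (n : ℕ) :
    tail q ε n = term q ε n + tail q ε (n + 1) := by
  rw [tail, (summable_abs_term_add hq hε n).of_abs.tsum_eq_zero_add, tail, add_zero]
  exact congrArg _ (tsum_congr fun j => congrArg _ (by omega))

theorem scaledTail_succ (hq : ∀ i, 2 ≤ q i) (hε : ∀ i, ε i < q i) (n : ℕ) :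
    scaledTail q ε (n + 1) = -(ε n : ℝ) + -(q n : ℝ) * scaledTail q ε n := by
  have hden := (den_pos (fun i => zero_lt_two.trans_le (hq i)) n).ne'
  have hqn : (q n : ℝ) ≠ 0 := by exact_mod_cast (zero_lt_two.trans_le (hq n)).ne'
  rw [scaledTail, scaledTail, tail_eq_term_add_tail_succ hq hε n, term, den_succ, pow_succ]
  rcases neg_one_pow_eq_or ℝ n with h | h <;> rw [h] <;> field_simp <;> ring

theorem scaledTail_zero : scaledTail q ε 0 = ∑' n, term q ε n := by
  simp [scaledTail, tail, den]

theorem tail_eq_iff_scaledTail_eq (hq : ∀ i, 2 ≤ q i) {k t : ℕ} (hkt : k ≤ t) :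
    tail q ε k = (-1) ^ (t - k) * (∏ i ∈ Ico k t, (q i : ℝ)) * tail q ε t ↔
      scaledTail q ε k = scaledTail q ε t := by
  have hc : (-1) ^ k * den q k ≠ 0 :=
    mul_ne_zero (by simp) (den_pos (fun i => zero_lt_two.trans_le (hq i)) k).ne'
  have ht : scaledTail q ε t =
      (-1) ^ k * den q k * ((-1) ^ (t - k) * (∏ i ∈ Ico k t, (q i : ℝ)) * tail q ε t) := by
    rw [scaledTail, den_eq_den_mul_prod_Ico hkt, ← Nat.add_sub_cancel' hkt, pow_add,
      Nat.add_sub_cancel_left]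
    ring
  rw [ht, scaledTail, mul_right_inj' hc]

end AlternatingCantorSeries

open AlternatingCantorSeries in
/-- (Serbenyuk) A number `x` represented by an alternating Cantor series
`x = ∑_{n=1}^∞ (−1)^n ε_n / (q_1 ⋯ q_n)` is rational iff there exist `0 ≤ k < t` with
`∑_{n=k+1}^∞ (−1)^n ε_n/(q_1⋯q_n) = (−1)^{t−k} q_{k+1} ⋯ q_t ⬝ ∑_{n=t+1}^∞ (−1)^n ε_n/(q_1⋯q_n)`.
(Sequences are 0-indexed, so the paper's term of index `n` carries the sign `(−1)^{n}` with
`n = k + 1 + j`, i.e. `(−1)^{k+j+1}`.) -/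
theorem alternating_cantor_rational_iff_tail_eq
    (q ε : ℕ → ℕ) (hq : ∀ k, 2 ≤ q k) (hε : ∀ k, ε k < q k)
    (x : ℝ)
    (hx : x = ∑' n : ℕ, ((-1 : ℝ) ^ (n + 1) * (ε n : ℝ)) / ∏ i ∈ Finset.range (n + 1), (q i : ℝ)) :
    (∃ r : ℚ, x = (r : ℝ)) ↔
      ∃ k t : ℕ, k < t ∧
        (∑' j : ℕ, ((-1 : ℝ) ^ (k + j + 1) * (ε (k + j) : ℝ)) /
            ∏ i ∈ Finset.range (k + j + 1), (q i : ℝ)) =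
        (-1 : ℝ) ^ (t - k) * (∏ i ∈ Finset.Ico k t, (q i : ℝ)) *
          (∑' j : ℕ, ((-1 : ℝ) ^ (t + j + 1) * (ε (t + j) : ℝ)) /
            ∏ i ∈ Finset.range (t + j + 1), (q i : ℝ)) := by
  have hx0 : x = scaledTail q ε 0 := by rw [hx, scaledTail_zero]; rfl
  have hrec : ∀ n, scaledTail q ε (n + 1) =
      ((-(ε n : ℤ) : ℤ) : ℝ) + ((-(q n : ℤ) : ℤ) : ℝ) * scaledTail q ε n := fun n => by
    push_cast
    exact scaledTail_succ hq hε n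
  constructor
  · rintro ⟨r, hr⟩
    obtain ⟨k, t, hkt, h⟩ := exists_lt_eq_of_recurrence_of_bounded hrec
      (abs_scaledTail_le hq hε) (hx0.symm.trans hr)
    exact ⟨k, t, hkt, (tail_eq_iff_scaledTail_eq hq hkt.le).mpr h⟩
  · rintro ⟨k, t, hkt, h⟩
    have hb : ∀ n, 2 ≤ |(-(q n : ℤ))| := fun n => by
      rw [abs_neg, Nat.abs_cast]; exact_mod_cast hq n
    obtain ⟨r, hr⟩ := exists_rat_eq_of_recurrence_of_eq hrec hb hkt
      ((tail_eq_iff_scaledTail_eq hq hkt.le).mp h)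
    exact ⟨r, hx0.trans hr⟩
end

section
/- Let (q_k) and (ε_k) be sequences of positive integers with q_k ≥ 2 for all k, suppose the series S = ∑_{k=1}^∞ ε_k/(q_1 q_2 ⋯ q_k) converges, and set S_N = ∑_{k=N}^∞ ε_k/(q_N q_{N+1} ⋯ q_k). If the sequence (S_k) is bounded from below and for every ε > 0 there exists k_0(ε) such that S_{k+1} − S_k < ε for all k ≥ k_0(ε), then S is rational if and only if there exist a rational constant c and a positive integer N_0 such that ε_k = c · (q_k − 1) for all k > N_0. -/
open Finset Filter

/-!
Write `T N` for `cantorTail q ε N`, so that `q N * T N = ε N + T (N + 1)`. If `T 0` is a rational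
with denominator `d`, this recursion keeps every `d * T N` an integer. Increments of `T` that are
eventually below `1 / d` are then eventually `≤ 0`, so the integers `d * T N` are eventually
nonincreasing and, being bounded below, eventually constant, say `T N = c`; the recursion then
reads `ε N = c * (q N - 1)`. Conversely, if `ε k = c * (q k - 1)` for `k ≥ N₀`, the series for
`T N₀` telescopes to `c`, and running the recursion backwards shows that `T 0` is rational.
-/

/-- The tail sum `S_{N+1} = ∑_{k=N+1}^∞ ε_k/(q_{N+1} ⋯ q_k)` of a Cantor series
(0-indexed: `cantorTail q ε N` is the paper's `S_{N+1}`). -/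
noncomputable def cantorTail (q ε : ℕ → ℕ) (N : ℕ) : ℝ :=
  ∑' j : ℕ, (ε (N + j) : ℝ) / ∏ i ∈ Finset.Ico N (N + j + 1), (q i : ℝ)

theorem Antitone.hasSum_sub_succ {a : ℕ → ℝ} (ha : Antitone a) (h : Tendsto a atTop (nhds 0)) :
    HasSum (fun j => a j - a (j + 1)) (a 0) := by
  rw [hasSum_iff_tendsto_nat_of_nonneg fun j => sub_nonneg.2 (ha j.le_succ)]
  simp_rw [Finset.sum_range_sub']
  simpa using tendsto_const_nhds.sub h

theorem Int.eventuallyConst_of_bddBelow_of_eventually_succ_le {f : ℕ → ℤ}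
    (hbdd : BddBelow (Set.range f)) (hf : ∀ᶠ n in atTop, f (n + 1) ≤ f n) :
    atTop.EventuallyConst f := by
  obtain ⟨n₀, hn₀⟩ := eventually_atTop.1 hf
  set g : ℕ → ℤ := fun n => f (n + n₀)
  have hg : Antitone g := antitone_nat_of_succ_le fun n => by
    simpa [g, add_right_comm] using hn₀ (n + n₀) (by omega)
  have hgc : atTop.EventuallyConst g := by
    have := tendsto_atTop_ciInf hg (hbdd.mono (Set.range_comp_subset_range (· + n₀) f))
    rw [nhds_discrete] at this
    exact .of_tendsto this
  rw [eventuallyConst_atTop_nat] at hgc ⊢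
  obtain ⟨n, hn⟩ := hgc
  refine ⟨n + n₀, fun m hm => ?_⟩
  obtain ⟨k, rfl⟩ : ∃ k, m = k + n₀ := ⟨m - n₀, by omega⟩
  simpa [g, add_right_comm] using hn k (by omega)

variable {q ε : ℕ → ℕ}

theorem cantorTail_zero :
    cantorTail q ε 0 = ∑' k, (ε k : ℝ) / ∏ i ∈ range (k + 1), (q i : ℝ) := by
  simp only [cantorTail, zero_add, range_eq_Ico]

theorem summable_cantorTail (hq : ∀ k, 0 < q k)
    (hsum : Summable fun k => (ε k : ℝ) / ∏ i ∈ range (k + 1), (q i : ℝ)) (N : ℕ) :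
    Summable fun j => (ε (N + j) : ℝ) / ∏ i ∈ Ico N (N + j + 1), (q i : ℝ) := by
  have hP : ∏ i ∈ range N, (q i : ℝ) ≠ 0 :=
    prod_ne_zero_iff.2 fun i _ => by exact_mod_cast (hq i).ne'
  refine (((summable_nat_add_iff N).2 hsum).mul_left (∏ i ∈ range N, (q i : ℝ))).congr fun j => ?_
  rw [add_comm j N, ← prod_range_mul_prod_Ico _ (by omega : N ≤ N + j + 1), mul_div_assoc',
    mul_div_mul_left _ _ hP]

theorem mul_cantorTail (hq : ∀ k, 0 < q k)
    (hsum : Summable fun k => (ε k : ℝ) / ∏ i ∈ range (k + 1), (q i : ℝ)) (N : ℕ) :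
    (q N : ℝ) * cantorTail q ε N = ε N + cantorTail q ε (N + 1) := by
  have hqN : (q N : ℝ) ≠ 0 := by exact_mod_cast (hq N).ne'
  have hshift : ∀ j, (ε (N + (j + 1)) : ℝ) / ∏ i ∈ Ico N (N + (j + 1) + 1), (q i : ℝ)
      = (q N : ℝ)⁻¹ * ((ε (N + 1 + j) : ℝ) / ∏ i ∈ Ico (N + 1) (N + 1 + j + 1), (q i : ℝ)) :=
    fun j => by
      rw [prod_eq_prod_Ico_succ_bot (by omega), show N + (j + 1) = N + 1 + j by omega,
        div_mul_eq_div_div, inv_mul_eq_div, div_div, div_div, mul_comm]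
  rw [cantorTail, (summable_cantorTail hq hsum N).tsum_eq_zero_add, tsum_congr hshift,
    tsum_mul_left, cantorTail]
  simp only [add_zero, Nat.Ico_succ_singleton, prod_singleton]
  field_simp

theorem two_pow_le_prod_Ico (hq : ∀ k, 2 ≤ q k) (N j : ℕ) :
    (2 : ℝ) ^ j ≤ ∏ i ∈ Ico N (N + j), (q i : ℝ) := by
  have := pow_card_le_prod (Ico N (N + j)) q 2 fun i _ => hq i
  rw [Nat.card_Ico, Nat.add_sub_cancel_left] at this
  exact_mod_cast this

theorem hasSum_sub_one_div_prod_Ico (hq : ∀ k, 2 ≤ q k) (N : ℕ) :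
    HasSum (fun j => ((q (N + j) : ℝ) - 1) / ∏ i ∈ Ico N (N + j + 1), (q i : ℝ)) 1 := by
  set a : ℕ → ℝ := fun j => (∏ i ∈ Ico N (N + j), (q i : ℝ))⁻¹
  have hP : ∀ j, 0 < ∏ i ∈ Ico N (N + j), (q i : ℝ) := fun j =>
    (pow_pos two_pos j).trans_le (two_pow_le_prod_Ico hq N j)
  have hsucc : ∀ j, ∏ i ∈ Ico N (N + j + 1), (q i : ℝ) =
      (∏ i ∈ Ico N (N + j), (q i : ℝ)) * q (N + j) := fun j => prod_Ico_succ_top (by omega) _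
  have hq1 : ∀ j, (1 : ℝ) ≤ q (N + j) := fun j => by exact_mod_cast (hq (N + j)).trans' one_le_two
  have ha : Antitone a := antitone_nat_of_succ_le fun j => by
    simp only [a, ← add_assoc, hsucc]
    exact inv_anti₀ (hP j) (le_mul_of_one_le_right (hP j).le (hq1 j))
  have hlim : Tendsto a atTop (nhds 0) :=
    tendsto_inv_atTop_zero.comp <| tendsto_atTop_mono (two_pow_le_prod_Ico hq N)
      (tendsto_pow_atTop_atTop_of_one_lt one_lt_two)
  convert ha.hasSum_sub_succ hlim using 1
  · ext j
    have := (hP j).ne'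
    have : (q (N + j) : ℝ) ≠ 0 := by linarith [hq1 j]
    simp only [a, ← add_assoc, hsucc]
    field_simp
  · simp [a]

theorem cantorTail_eq_of_forall_eq_mul (hq : ∀ k, 2 ≤ q k) {c : ℝ} {N : ℕ}
    (hc : ∀ k ≥ N, (ε k : ℝ) = c * ((q k : ℝ) - 1)) : cantorTail q ε N = c := by
  have h := (hasSum_sub_one_div_prod_Ico hq N).mul_left c
  rw [mul_one] at h
  rw [cantorTail, ← h.tsum_eq]
  exact tsum_congr fun j => by rw [hc (N + j) (by omega), mul_div_assoc]

theorem exists_rat_cantorTail_zero (hq : ∀ k, 0 < q k)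
    (hsum : Summable fun k => (ε k : ℝ) / ∏ i ∈ range (k + 1), (q i : ℝ)) {N : ℕ}
    (hN : ∃ s : ℚ, cantorTail q ε N = s) : ∃ s : ℚ, cantorTail q ε 0 = s := by
  induction N with
  | zero => exact hN
  | succ n ih =>
    obtain ⟨s, hs⟩ := hN
    refine ih ⟨(ε n + s) / q n, ?_⟩
    have hqn : (q n : ℝ) ≠ 0 := by exact_mod_cast (hq n).ne'
    push_cast
    rw [eq_div_iff hqn, mul_comm, mul_cantorTail hq hsum, hs]

theorem exists_int_cantorTail_mul_den (hq : ∀ k, 0 < q k)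
    (hsum : Summable fun k => (ε k : ℝ) / ∏ i ∈ range (k + 1), (q i : ℝ)) {r : ℚ}
    (hr : cantorTail q ε 0 = r) (N : ℕ) : ∃ z : ℤ, cantorTail q ε N * r.den = z := by
  induction N with
  | zero => exact ⟨r.num, by rw [hr, Rat.cast_def, div_mul_cancel₀ _ (by positivity)]⟩
  | succ n ih =>
    obtain ⟨z, hz⟩ := ih
    refine ⟨q n * z - ε n * r.den, ?_⟩
    push_cast
    rw [← hz]
    linear_combination (-(r.den : ℝ)) * mul_cantorTail hq hsum n

theorem eventually_cantorTail_eq_rat (hq : ∀ k, 0 < q k)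
    (hsum : Summable fun k => (ε k : ℝ) / ∏ i ∈ range (k + 1), (q i : ℝ))
    (hbdd : ∃ C : ℝ, ∀ k : ℕ, C ≤ cantorTail q ε k)
    (hcauchy : ∀ δ : ℝ, 0 < δ → ∃ k₀ : ℕ, ∀ k ≥ k₀, cantorTail q ε (k + 1) - cantorTail q ε k < δ)
    {r : ℚ} (hr : cantorTail q ε 0 = r) : ∃ c : ℚ, ∀ᶠ k in atTop, cantorTail q ε k = c := by
  have hd : (0 : ℝ) < r.den := by positivity
  choose Z hZ using exists_int_cantorTail_mul_den hq hsum hr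
  have hT : ∀ k, cantorTail q ε k = Z k / r.den := fun k => by
    rw [← hZ, mul_div_cancel_right₀ _ hd.ne']
  have hZc : atTop.EventuallyConst Z := by
    refine Int.eventuallyConst_of_bddBelow_of_eventually_succ_le ?_ ?_
    · obtain ⟨C, hC⟩ := hbdd
      refine ⟨⌈C * r.den⌉, ?_⟩
      rintro _ ⟨k, rfl⟩
      exact Int.ceil_le.2 (hZ k ▸ mul_le_mul_of_nonneg_right (hC k) hd.le)
    · obtain ⟨k₀, hk₀⟩ := hcauchy (1 / r.den) (by positivity)
      filter_upwards [eventually_ge_atTop k₀] with k hk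
      have h := hk₀ k hk
      rw [hT, hT, ← sub_div, div_lt_div_iff_of_pos_right hd] at h
      have : Z (k + 1) - Z k < 1 := by exact_mod_cast h
      omega
  obtain ⟨m, hm⟩ := eventuallyConst_iff_exists_eventuallyEq.1 hZc
  refine ⟨m / r.den, hm.mono fun k hk => ?_⟩
  rw [hT, hk]
  push_cast
  rfl

theorem hancl_tijdeman_rational_iff_const_ratio_general
    (q ε : ℕ → ℕ) (hq : ∀ k, 2 ≤ q k)
    (hsum : Summable (fun k : ℕ => (ε k : ℝ) / ∏ i ∈ Finset.range (k + 1), (q i : ℝ)))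
    (hbdd : ∃ C : ℝ, ∀ k : ℕ, C ≤ cantorTail q ε k)
    (hcauchy : ∀ δ : ℝ, 0 < δ → ∃ k₀ : ℕ, ∀ k ≥ k₀, cantorTail q ε (k + 1) - cantorTail q ε k < δ) :
    (∃ r : ℚ, (∑' k : ℕ, (ε k : ℝ) / ∏ i ∈ Finset.range (k + 1), (q i : ℝ)) = (r : ℝ)) ↔
      ∃ c : ℚ, ∃ N₀ : ℕ, ∀ k ≥ N₀, (ε k : ℚ) = c * ((q k : ℚ) - 1) := by
  have hq₀ : ∀ k, 0 < q k := fun k => zero_lt_two.trans_le (hq k)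
  rw [← cantorTail_zero]
  constructor
  · rintro ⟨r, hr⟩
    obtain ⟨c, hc⟩ := eventually_cantorTail_eq_rat hq₀ hsum hbdd hcauchy hr
    obtain ⟨N₀, hN₀⟩ := eventually_atTop.1 (hc.and ((tendsto_add_atTop_nat 1).eventually hc))
    refine ⟨c, N₀, fun k hk => ?_⟩
    have h := mul_cantorTail hq₀ hsum k
    rw [(hN₀ k hk).1, (hN₀ k hk).2] at h
    exact_mod_cast (by linarith : (ε k : ℝ) = c * ((q k : ℝ) - 1))
  · rintro ⟨c, N₀, hc⟩
    exact exists_rat_cantorTail_zero hq₀ hsum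
      ⟨c, cantorTail_eq_of_forall_eq_mul hq fun k hk => by exact_mod_cast hc k hk⟩

/-- (Hančl–Tijdeman) Let `(q_k)`, `(ε_k)` be positive integers with
`q_k ≥ 2` and `S = ∑ ε_k/(q_1⋯q_k)` convergent. If `(S_k)` is bounded from below and for
every `δ > 0` one has `S_{k+1} − S_k < δ` for all `k ≥ k₀(δ)`, then `S ∈ ℚ` iff
`ε_k/(q_k − 1)` is a (rational) constant `c` for all `k` greater than some `N₀`.
(Sequences are 0-indexed.) -/
theorem hancl_tijdeman_rational_iff_const_ratio
    (q ε : ℕ → ℕ) (hq : ∀ k, 2 ≤ q k) (hε : ∀ k, 0 < ε k)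
    (hsum : Summable (fun k : ℕ => (ε k : ℝ) / ∏ i ∈ Finset.range (k + 1), (q i : ℝ)))
    (hbdd : ∃ C : ℝ, ∀ k : ℕ, C ≤ cantorTail q ε k)
    (hcauchy : ∀ δ : ℝ, 0 < δ → ∃ k₀ : ℕ, ∀ k ≥ k₀, cantorTail q ε (k + 1) - cantorTail q ε k < δ) :
    (∃ r : ℚ, (∑' k : ℕ, (ε k : ℝ) / ∏ i ∈ Finset.range (k + 1), (q i : ℝ)) = (r : ℝ)) ↔
      ∃ c : ℚ, ∃ N₀ : ℕ, ∀ k ≥ N₀, (ε k : ℚ) = c * ((q k : ℚ) - 1) :=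
  hancl_tijdeman_rational_iff_const_ratio_general q ε hq hsum hbdd hcauchy
end

section
/- Let (q_k) be an unbounded monotone non-decreasing sequence of integers with q_k ≥ 2 for all k. Then ∑_{k=1}^∞ k/(q_1 q_2 ⋯ q_k) is rational if and only if there exist a rational constant c and a positive integer k_0 such that k = c · (q_k − 1) for all k ≥ k_0. -/
/-! If `k + 1 = c (q_k - 1)` from `k₀` on, then `(k + 1)/(q_0⋯q_k) = c/(q_0⋯q_{k-1}) - c/(q_0⋯q_k)`,
so the tail of the series telescopes to `c/(q_0⋯q_{k₀-1})` and the sum is rational.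

Conversely, if the sum is `a/b`, then `t_n = b q_0⋯q_{n-1} ∑_{k ≥ n} (k + 1)/(q_0⋯q_k)` is a
positive integer with `t_{n+1} = q_n t_n - b (n + 1)`. Comparing the tail with a geometric series
of ratio `1/q_n` (monotonicity of `q`) gives `(q_n - 1) t_n < b (n + 1) + 1` as soon as
`q_n ≥ b + 2`, which by unboundedness holds eventually. Then `t` is eventually non-increasing,
hence eventually equal to a constant `T`, and the recursion reads `b (n + 1) = T (q_n - 1)`. -/

open Finset Filter

theorem hasSum_add_mul_geometric {𝕜 : Type*} [NormedField 𝕜] [CompleteSpace 𝕜] {x : 𝕜}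
    (hx : ‖x‖ < 1) (m : 𝕜) :
    HasSum (fun k : ℕ => (m + k) * x ^ (k + 1)) (m * x / (1 - x) + x ^ 2 / (1 - x) ^ 2) := by
  have hx1 : 1 - x ≠ 0 := sub_ne_zero.2 (fun h => by simp [← h] at hx)
  have h := ((hasSum_geometric_of_norm_lt_one hx).mul_left (m * x)).add
    ((hasSum_coe_mul_geometric_of_norm_lt_one hx).mul_left x)
  rw [show m * x * (1 - x)⁻¹ + x * (x / (1 - x) ^ 2) = m * x / (1 - x) + x ^ 2 / (1 - x) ^ 2 by
    field_simp] at h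
  exact h.congr_fun fun k => by ring

theorem exists_forall_ge_eq_of_antitoneOn {f : ℕ → ℤ} {M : ℕ} (hf : AntitoneOn f (Set.Ici M))
    (hbdd : BddBelow (Set.range f)) : ∃ N, ∀ n ≥ N, f n = f N := by
  obtain ⟨lb, hlb⟩ := hbdd
  obtain ⟨_, ⟨N, hN, rfl⟩, hmin⟩ := Int.exists_least_of_bdd (P := fun z => ∃ n ≥ M, f n = z)
    ⟨lb, fun _ ⟨n, _, hn⟩ => hn ▸ hlb ⟨n, rfl⟩⟩ ⟨f M, M, le_rfl, rfl⟩
  exact ⟨N, fun n hn => le_antisymm (hf hN (hN.trans hn) hn) (hmin _ ⟨n, hN.trans hn, rfl⟩)⟩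

namespace HanclTijdeman

def partialProd (q : ℕ → ℕ) (n : ℕ) : ℕ := ∏ i ∈ range n, q i

noncomputable def term (q : ℕ → ℕ) (k : ℕ) : ℝ := (k + 1) / partialProd q (k + 1)

noncomputable def tail (q : ℕ → ℕ) (n : ℕ) : ℝ := ∑' k, term q (k + n)

variable {q : ℕ → ℕ}

theorem partialProd_succ (n : ℕ) : partialProd q (n + 1) = partialProd q n * q n :=
  prod_range_succ _ _

theorem partialProd_pos (hq : ∀ k, 0 < q k) (n : ℕ) : 0 < partialProd q n :=
  prod_pos fun i _ => hq i

theorem pow_le_partialProd {m : ℕ} (hq : ∀ k, m ≤ q k) (n : ℕ) : m ^ n ≤ partialProd q n := by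
  simpa [partialProd] using pow_card_le_prod (range n) q m fun i _ => hq i

theorem partialProd_mul_pow_le (hmono : Monotone q) (n k : ℕ) :
    partialProd q n * q n ^ k ≤ partialProd q (n + k) :=
  calc partialProd q n * q n ^ k = partialProd q n * q n ^ #(Ico n (n + k)) := by simp
    _ ≤ partialProd q n * ∏ i ∈ Ico n (n + k), q i := by
      gcongr
      exact pow_card_le_prod _ _ _ fun i hi => hmono (mem_Ico.1 hi).1
    _ = partialProd q (n + k) := prod_range_mul_prod_Ico _ (Nat.le_add_right n k)

theorem tendsto_partialProd_atTop (hq : ∀ k, 2 ≤ q k) :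
    Tendsto (partialProd q) atTop atTop :=
  tendsto_atTop_mono (pow_le_partialProd hq) (tendsto_pow_atTop_atTop_of_one_lt one_lt_two)

theorem term_nonneg (k : ℕ) : 0 ≤ term q k := by
  unfold term; positivity

theorem term_pos (hq : ∀ k, 0 < q k) (k : ℕ) : 0 < term q k := by
  have := partialProd_pos hq (k + 1)
  unfold term; positivity

theorem partialProd_mul_term (hq : ∀ k, 0 < q k) (k : ℕ) :
    (partialProd q (k + 1) : ℝ) * term q k = k + 1 := by
  have := partialProd_pos hq (k + 1)
  unfold term; field_simp

theorem summable_term (hq : ∀ k, 2 ≤ q k) : Summable (term q) := by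
  refine (hasSum_add_mul_geometric (x := (1 / 2 : ℝ)) (by norm_num) 1).summable.of_nonneg_of_le
    term_nonneg fun k => ?_
  have h2 : ((2 ^ (k + 1) : ℕ) : ℝ) ≤ partialProd q (k + 1) := by
    exact_mod_cast pow_le_partialProd hq (k + 1)
  calc term q k ≤ (k + 1) / ((2 ^ (k + 1) : ℕ) : ℝ) := by
        unfold term; gcongr
    _ = (1 + k) * (1 / 2) ^ (k + 1) := by rw [one_div, inv_pow]; push_cast; ring

theorem term_eq_div_sub_div (hq : ∀ k, 0 < q k) {c : ℝ} {k : ℕ} (hk : (k : ℝ) + 1 = c * (q k - 1)) :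
    term q k = c / partialProd q k - c / partialProd q (k + 1) := by
  have hP := partialProd_pos hq k
  have hqk := hq k
  rw [term, hk, partialProd_succ]
  push_cast
  field_simp

theorem hasSum_term_add_of_eq_mul (hq : ∀ k, 2 ≤ q k) {c : ℝ} {k₀ : ℕ}
    (h : ∀ k ≥ k₀, (k : ℝ) + 1 = c * (q k - 1)) :
    HasSum (fun k => term q (k + k₀)) (c / partialProd q k₀) := by
  have hq₀ : ∀ k, 0 < q k := fun k => zero_lt_two.trans_le (hq k)
  have htel : ∀ k, term q (k + k₀) =
      c / partialProd q (k + k₀) - c / partialProd q (k + 1 + k₀) := fun k => by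
    rw [term_eq_div_sub_div hq₀ (h _ (Nat.le_add_left _ _)), Nat.add_right_comm]
  rw [hasSum_iff_tendsto_nat_of_nonneg (fun k => term_nonneg _)]
  simp_rw [htel, sum_range_sub', zero_add]
  have hlim : Tendsto (fun n => c / partialProd q (n + k₀)) atTop (nhds 0) :=
    tendsto_const_nhds.div_atTop <| tendsto_natCast_atTop_atTop.comp <|
      (tendsto_partialProd_atTop hq).comp (tendsto_add_atTop_nat k₀)
  simpa using tendsto_const_nhds.sub hlim

theorem exists_rat_tsum_term_eq (hq : ∀ k, 2 ≤ q k) {c : ℚ} {k₀ : ℕ}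
    (h : ∀ k ≥ k₀, (k : ℚ) + 1 = c * (q k - 1)) :
    ∃ r : ℚ, ∑' k, term q k = r := by
  have h' : ∀ k ≥ k₀, (k : ℝ) + 1 = c * (q k - 1) := fun k hk => by
    exact_mod_cast congrArg (Rat.cast : ℚ → ℝ) (h k hk)
  refine ⟨∑ k ∈ range k₀, (k + 1 : ℚ) / partialProd q (k + 1) + c / partialProd q k₀, ?_⟩
  rw [← (summable_term hq).sum_add_tsum_nat_add k₀, (hasSum_term_add_of_eq_mul hq h').tsum_eq]
  push_cast
  rfl

theorem tail_eq_term_add_tail (hs : Summable (term q)) (n : ℕ) :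
    tail q n = term q n + tail q (n + 1) := by
  rw [tail, ((summable_nat_add_iff n).2 hs).tsum_eq_zero_add, zero_add, tail]
  simp only [Nat.add_right_comm _ 1 n, add_assoc]

theorem tail_pos (hq : ∀ k, 2 ≤ q k) (n : ℕ) : 0 < tail q n :=
  ((summable_nat_add_iff n).2 (summable_term hq)).tsum_pos (fun _ => term_nonneg _) 0
    (term_pos (fun k => zero_lt_two.trans_le (hq k)) _)

theorem partialProd_mul_tail_le (hq : ∀ k, 2 ≤ q k) (hmono : Monotone q) (n : ℕ) :
    (partialProd q n : ℝ) * tail q n ≤ (n + 1) / (q n - 1) + 1 / (q n - 1) ^ 2 := by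
  have hQ : (2 : ℝ) ≤ q n := by exact_mod_cast hq n
  have hx : ‖(q n : ℝ)⁻¹‖ < 1 := by
    rw [norm_inv, Real.norm_of_nonneg (by linarith)]
    exact inv_lt_one_of_one_lt₀ (by linarith)
  have hP : (0 : ℝ) < partialProd q n := by
    exact_mod_cast partialProd_pos (fun k => zero_lt_two.trans_le (hq k)) n
  have hterm : ∀ k, (partialProd q n : ℝ) * term q (k + n) ≤
      (n + 1 + k) * (q n : ℝ)⁻¹ ^ (k + 1) := by
    intro k
    have hle : (partialProd q n : ℝ) * (q n : ℝ) ^ (k + 1) ≤ partialProd q (k + n + 1) := by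
      have := partialProd_mul_pow_le hmono n (k + 1)
      rw [show n + (k + 1) = k + n + 1 by ring] at this
      exact_mod_cast this
    have : (0 : ℝ) < (q n : ℝ) ^ (k + 1) := by positivity
    have : (0 : ℝ) < partialProd q (k + n + 1) := by linarith [mul_pos hP this]
    rw [term, mul_div_assoc', div_le_iff₀ this, inv_pow]
    calc (partialProd q n : ℝ) * ((k + n : ℕ) + 1)
        = (n + 1 + k) * ((q n : ℝ) ^ (k + 1))⁻¹ * (partialProd q n * (q n : ℝ) ^ (k + 1)) := by
          push_cast; field_simp; ring
      _ ≤ (n + 1 + k) * ((q n : ℝ) ^ (k + 1))⁻¹ * partialProd q (k + n + 1) := by gcongr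
  have hsum : HasSum (fun k => (partialProd q n : ℝ) * term q (k + n))
      (partialProd q n * tail q n) :=
    ((summable_nat_add_iff n).2 (summable_term hq)).hasSum.mul_left _
  calc (partialProd q n : ℝ) * tail q n
      ≤ (n + 1) * (q n : ℝ)⁻¹ / (1 - (q n : ℝ)⁻¹) + (q n : ℝ)⁻¹ ^ 2 / (1 - (q n : ℝ)⁻¹) ^ 2 :=
        hasSum_le hterm hsum (hasSum_add_mul_geometric hx _)
    _ = (n + 1) / (q n - 1) + 1 / (q n - 1) ^ 2 := by
        have : (q n : ℝ) - 1 ≠ 0 := by linarith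
        field_simp

/-- The integers `t_n` above, defined through their recursion so that integrality is free. -/
def remainderSeq (q : ℕ → ℕ) (a : ℤ) (b : ℕ) : ℕ → ℤ
  | 0 => a
  | n + 1 => q n * remainderSeq q a b n - b * (n + 1)

variable {a : ℤ} {b : ℕ}

theorem cast_remainderSeq (hq : ∀ k, 2 ≤ q k) (hab : b * ∑' k, term q k = a) (n : ℕ) :
    (remainderSeq q a b n : ℝ) = b * partialProd q n * tail q n := by
  induction n with
  | zero => simp [remainderSeq, partialProd, tail, hab]
  | succ n ih =>
    have hn := partialProd_mul_term (fun k => zero_lt_two.trans_le (hq k)) n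
    push_cast [partialProd_succ] at hn ⊢
    rw [remainderSeq, Int.cast_sub, Int.cast_mul, ih, tail_eq_term_add_tail (summable_term hq) n]
    push_cast
    linear_combination (b : ℝ) * hn

theorem remainderSeq_pos (hq : ∀ k, 2 ≤ q k) (hb : 0 < b) (hab : b * ∑' k, term q k = a)
    (n : ℕ) : 0 < remainderSeq q a b n := by
  have hP : (0 : ℝ) < partialProd q n := by
    exact_mod_cast partialProd_pos (fun k => zero_lt_two.trans_le (hq k)) n
  have := tail_pos hq n
  have : (0 : ℝ) < remainderSeq q a b n := by
    rw [cast_remainderSeq hq hab]; positivity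
  exact_mod_cast this

theorem remainderSeq_succ_le (hq : ∀ k, 2 ≤ q k) (hmono : Monotone q)
    (hab : b * ∑' k, term q k = a) {n : ℕ} (hn : b + 2 ≤ q n) :
    remainderSeq q a b (n + 1) ≤ remainderSeq q a b n := by
  have hQ : (b : ℝ) + 2 ≤ q n := by exact_mod_cast hn
  have hbound : ((q n : ℝ) - 1) * remainderSeq q a b n < b * (n + 1) + 1 := by
    have hQ1 : (0 : ℝ) < q n - 1 := by linarith
    calc ((q n : ℝ) - 1) * remainderSeq q a b n
        = (q n - 1) * b * (partialProd q n * tail q n) := by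
          rw [cast_remainderSeq hq hab]; ring
      _ ≤ (q n - 1) * b * ((n + 1) / (q n - 1) + 1 / (q n - 1) ^ 2) := by
          gcongr; exact partialProd_mul_tail_le hq hmono n
      _ = b * (n + 1) + b / (q n - 1) := by field_simp
      _ < b * (n + 1) + 1 := by
          gcongr; rw [div_lt_one hQ1]; linarith
  have hle : ((q n : ℤ) - 1) * remainderSeq q a b n ≤ b * (n + 1) :=
    Int.lt_add_one_iff.1 (by exact_mod_cast hbound)
  rw [remainderSeq]
  linarith

theorem exists_eq_mul_of_tsum_term_eq_rat (hq : ∀ k, 2 ≤ q k) (hmono : Monotone q)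
    (hunbdd : ¬ BddAbove (Set.range q)) {r : ℚ} (hr : ∑' k, term q k = r) :
    ∃ c : ℚ, ∃ k₀ : ℕ, ∀ k ≥ k₀, (k : ℚ) + 1 = c * (q k - 1) := by
  have hab : (r.den : ℝ) * ∑' k, term q k = r.num := by
    rw [hr, Rat.cast_def]; field_simp
  obtain ⟨M, hM⟩ : ∃ M, r.den + 2 ≤ q M := by
    obtain ⟨_, ⟨M, rfl⟩, hM⟩ := not_bddAbove_iff.1 hunbdd (r.den + 1)
    exact ⟨M, hM⟩
  obtain ⟨N, hN⟩ := exists_forall_ge_eq_of_antitoneOn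
    (antitoneOn_nat_Ici_of_succ_le fun n hn =>
      remainderSeq_succ_le hq hmono hab (hM.trans (hmono hn)))
    ⟨0, Set.forall_mem_range.2 fun n => (remainderSeq_pos hq r.den_pos hab n).le⟩
  refine ⟨remainderSeq q r.num r.den N / r.den, N, fun k hk => ?_⟩
  have hrec : (r.den : ℤ) * (k + 1) = remainderSeq q r.num r.den N * (q k - 1) := by
    have := hN (k + 1) (by omega)
    rw [remainderSeq, hN k hk] at this
    linarith
  have hden : (r.den : ℚ) ≠ 0 := by positivity
  rw [div_mul_eq_mul_div, eq_div_iff hden]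
  have := congrArg (Int.cast : ℤ → ℚ) hrec
  push_cast at this
  linarith

end HanclTijdeman

open HanclTijdeman in
/-- (Hančl–Tijdeman) Let `(q_k)` be an unbounded monotone non-decreasing
sequence of integers `≥ 2`. Then `∑_{k=1}^∞ k/(q_1⋯q_k)` is rational iff `k/(q_k − 1)` is a
(rational) constant `c` for all `k ≥ k₀`. (Sequences are 0-indexed, so the paper's `k`-th
numerator is `k = (k₀-indexed k) + 1`.) -/
theorem hancl_tijdeman_rational_iff_const_ratio_of_k
    (q : ℕ → ℕ) (hq : ∀ k, 2 ≤ q k) (hmono : Monotone q)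
    (hunbdd : ¬ BddAbove (Set.range q)) :
    (∃ r : ℚ, (∑' k : ℕ, ((k : ℝ) + 1) / ∏ i ∈ Finset.range (k + 1), (q i : ℝ)) = (r : ℝ)) ↔
      ∃ c : ℚ, ∃ k₀ : ℕ, ∀ k ≥ k₀, ((k : ℚ) + 1) = c * ((q k : ℚ) - 1) := by
  have hterm : (fun k : ℕ => ((k : ℝ) + 1) / ∏ i ∈ Finset.range (k + 1), (q i : ℝ)) = term q := by
    funext k; simp [term, partialProd]
  rw [hterm]
  exact ⟨fun ⟨_, hr⟩ => exists_eq_mul_of_tsum_term_eq_rat hq hmono hunbdd hr,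
    fun ⟨_, _, h⟩ => exists_rat_tsum_term_eq hq h⟩
end

section
/- Let (q_n) be a monotone non-decreasing sequence of integers with q_n ≥ 2 for all n, and let (ε_n) be a sequence of integers such that (ε_{n+1} − ε_n)/q_{n+1} → 0 as n → ∞. Then ∑_{n=1}^∞ ε_n/(q_1 q_2 ⋯ q_n) is rational if and only if there exist a rational constant c and a positive integer n_0 such that ε_n = c · (q_n − 1) for all n ≥ n_0. -/
open Finset Filter Topology

/-!
Let `T m = q₀ ⋯ q_{m-1} · ∑_{n ≥ m} ε_n / (q₀ ⋯ q_n)` be the rescaled tails of the series, so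
that `T 0` is its sum and `T (m + 1) = q_m T m - ε_m`. If `ε_n = c (q_n - 1)` for `n ≥ n₀`, the
tail telescopes to `T n₀ = c`, and running the recurrence backwards makes `T 0` rational.

Conversely, if the sum is `r` with denominator `d`, the recurrence keeps every `d T m` an integer.
Split `T m = ε_m A_m + R_m` with `A_m = ∑_j 1 / (q_m ⋯ q_{m+j})`. Monotonicity of `q` puts `A_m`
in `[1 / q_m, 1 / (q_m - 1)]`, and `ε_{n+1} - ε_n = o(q_{n+1})` makes `R_m = o(1 / q_m)`; hence
`T (m + 1) = θ_m T m + o(1)` with `θ_m = q_m - 1 / A_m ∈ [0, 1]`. Eventually, then, each integer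
`d T (m + 1)` lies between `0` and `d T m`, so `T` is eventually constant, and the recurrence
turns `T (m + 1) = T m` into `ε_m = (q_m - 1) T m`.
-/

lemma hasSum_coe_mul_half_pow : HasSum (fun n : ℕ ↦ (n : ℝ) * (1 / 2) ^ n) 2 := by
  have h := hasSum_coe_mul_geometric_of_norm_lt_one (𝕜 := ℝ) (r := 1 / 2) (by norm_num)
  norm_num at h ⊢
  exact h

lemma exists_mem_Icc_abs_sub_mul_le {x A e t R δ : ℝ} (hx : 1 < x) (hA₁ : x⁻¹ ≤ A)
    (hA₂ : A ≤ (x - 1)⁻¹) (ht : t = e * A + R) (hR : |R| ≤ δ / x) :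
    ∃ θ ∈ Set.Icc (0 : ℝ) 1, |(x * t - e) - θ * t| ≤ δ := by
  have hA : 0 < A := (inv_pos.2 (by linarith)).trans_le hA₁
  have hAx : A⁻¹ ≤ x := inv_le_of_inv_le₀ (by linarith) hA₁
  have hxA : x - 1 ≤ A⁻¹ := le_inv_of_le_inv₀ hA hA₂
  refine ⟨x - A⁻¹, ⟨by linarith, by linarith⟩, ?_⟩
  have hδ : 0 ≤ δ / x := (abs_nonneg R).trans hR
  have heq : (x * t - e) - (x - A⁻¹) * t = R * A⁻¹ := by rw [ht]; field_simp; ring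
  calc |(x * t - e) - (x - A⁻¹) * t| = |R| * A⁻¹ := by
        rw [heq, abs_mul, abs_of_pos (inv_pos.2 hA)]
    _ ≤ δ / x * x := mul_le_mul hR hAx (inv_pos.2 hA).le hδ
    _ = δ := div_mul_cancel₀ _ (by linarith)

lemma Int.mem_uIcc_zero_of_abs_sub_mul_lt_one {k z : ℤ} {θ : ℝ}
    (hθ : θ ∈ Set.Icc (0 : ℝ) 1) (h : |(k : ℝ) - θ * z| < 1) : k ∈ Set.uIcc 0 z := by
  obtain ⟨h₁, h₂⟩ := abs_lt.1 h
  rw [Set.mem_uIcc]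
  rcases le_total 0 z with hz | hz
  · have hz' : (0 : ℝ) ≤ z := by exact_mod_cast hz
    have hlo : ((-1 : ℤ) : ℝ) < k := by push_cast; nlinarith [hθ.1, hθ.2]
    have hhi : (k : ℝ) < ((z + 1 : ℤ) : ℝ) := by push_cast; nlinarith [hθ.1, hθ.2]
    have := Int.cast_lt.1 hlo; have := Int.cast_lt.1 hhi; omega
  · have hz' : (z : ℝ) ≤ 0 := by exact_mod_cast hz
    have hlo : ((z - 1 : ℤ) : ℝ) < k := by push_cast; nlinarith [hθ.1, hθ.2]
    have hhi : (k : ℝ) < ((1 : ℤ) : ℝ) := by push_cast; nlinarith [hθ.1, hθ.2]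
    have := Int.cast_lt.1 hlo; have := Int.cast_lt.1 hhi; omega

lemma Int.exists_forall_ge_eq_of_mem_uIcc_zero {z : ℕ → ℤ} {N : ℕ}
    (h : ∀ m ≥ N, z (m + 1) ∈ Set.uIcc 0 (z m)) : ∃ n₀, ∀ n ≥ n₀, z n = z n₀ := by
  have hstep : ∀ m ≥ N, (z (m + 1)).natAbs ≤ (z m).natAbs ∧
      ((z (m + 1)).natAbs = (z m).natAbs → z (m + 1) = z m) := fun m hm ↦ by
    have := Set.mem_uIcc.1 (h m hm); omega
  obtain ⟨n, hn⟩ := WellFoundedLT.antitone_chain_condition (f := fun k ↦ (z (N + k)).natAbs)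
    (antitone_nat_of_succ_le fun k ↦ (hstep (N + k) (by omega)).1)
  refine ⟨N + n, fun k hk ↦ ?_⟩
  obtain ⟨k, rfl⟩ := Nat.exists_eq_add_of_le hk
  induction k with
  | zero => rfl
  | succ k ih =>
    have h1 := hn (n + k) (by omega)
    have h2 := hn (n + k + 1) (by omega)
    rw [← ih (by omega)]
    exact (hstep (N + n + k) (by omega)).2 (by simp only [add_assoc] at h1 h2 ⊢; omega)

namespace TijdemanYuan

noncomputable section

variable {q a : ℕ → ℝ} {m j : ℕ}

def weight (q : ℕ → ℝ) (m j : ℕ) : ℝ := (∏ i ∈ range (j + 1), q (m + i))⁻¹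

def tail (q a : ℕ → ℝ) (m : ℕ) : ℝ := ∑' j, a (m + j) * weight q m j

lemma weight_zero : weight q m 0 = (q m)⁻¹ := by simp [weight]

lemma weight_succ_eq_inv_mul : weight q m (j + 1) = (q m)⁻¹ * weight q (m + 1) j := by
  simp only [weight, prod_range_succ' _ (j + 1), add_zero, mul_inv]
  simp only [add_assoc, add_comm 1, mul_comm]

lemma weight_succ_eq_div : weight q m (j + 1) = weight q m j / q (m + (j + 1)) := by
  rw [weight, prod_range_succ, mul_inv, ← div_eq_mul_inv, weight]

lemma weight_pos (hq : ∀ n, 0 < q n) (m j : ℕ) : 0 < weight q m j :=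
  inv_pos.2 (prod_pos fun _ _ ↦ hq _)

lemma weight_le_geometric (hq : ∀ n, 2 ≤ q n) (m j : ℕ) :
    weight q m j ≤ (q m)⁻¹ * (1 / 2) ^ j := by
  induction j with
  | zero => simp [weight_zero]
  | succ j ih =>
    rw [weight_succ_eq_div, div_le_iff₀ (by linarith [hq (m + (j + 1))]), pow_succ]
    have := weight_pos (fun n ↦ zero_lt_two.trans_le (hq n)) m j
    nlinarith [hq (m + (j + 1))]

lemma weight_le_pow (hq : ∀ n, 0 < q n) (hmono : Monotone q) (m j : ℕ) :
    weight q m j ≤ (q m)⁻¹ ^ (j + 1) := by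
  induction j with
  | zero => simp [weight_zero]
  | succ j ih =>
    rw [weight_succ_eq_div, pow_succ, div_eq_mul_inv]
    exact mul_le_mul ih (inv_anti₀ (hq m) (hmono (by omega)))
      (inv_nonneg.2 (hq _).le) (by positivity [hq m])

lemma summable_weight (hq : ∀ n, 2 ≤ q n) (m : ℕ) : Summable (weight q m) :=
  .of_nonneg_of_le (fun j ↦ (weight_pos (fun n ↦ zero_lt_two.trans_le (hq n)) m j).le)
    (weight_le_geometric hq m) (summable_geometric_two.mul_left _)

lemma inv_le_tsum_weight (hq : ∀ n, 2 ≤ q n) (m : ℕ) :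
    (q m)⁻¹ ≤ ∑' j, weight q m j := by
  rw [← weight_zero]
  exact (summable_weight hq m).le_tsum 0
    fun j _ ↦ (weight_pos (fun n ↦ zero_lt_two.trans_le (hq n)) m j).le

lemma tsum_weight_le (hq : ∀ n, 2 ≤ q n) (hmono : Monotone q) (m : ℕ) :
    ∑' j, weight q m j ≤ (q m - 1)⁻¹ := by
  have hq₀ : ∀ n, 0 < q n := fun n ↦ by linarith [hq n]
  have hr₀ : 0 ≤ (q m)⁻¹ := (inv_pos.2 (hq₀ m)).le
  have hr₁ : (q m)⁻¹ < 1 := inv_lt_one_of_one_lt₀ (by linarith [hq m])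
  have hgeom : HasSum (fun j ↦ (q m)⁻¹ ^ (j + 1)) ((q m)⁻¹ * (1 - (q m)⁻¹)⁻¹) := by
    simpa only [pow_succ'] using (hasSum_geometric_of_lt_one hr₀ hr₁).mul_left (q m)⁻¹
  calc ∑' j, weight q m j ≤ ∑' j, (q m)⁻¹ ^ (j + 1) :=
        (summable_weight hq m).tsum_le_tsum (weight_le_pow hq₀ hmono m) hgeom.summable
    _ = (q m - 1)⁻¹ := by
        rw [hgeom.tsum_eq]
        have : q m - 1 ≠ 0 := by linarith [hq m]
        field_simp [(hq₀ m).ne']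

section Increments

variable {η : ℝ} {N : ℕ}

lemma abs_sub_le_of_abs_succ_sub_le (hmono : Monotone q) (hη : 0 ≤ η)
    (hN : ∀ k ≥ N, |a (k + 1) - a k| ≤ η * q (k + 1)) (hm : N ≤ m) (j : ℕ) :
    |a (m + j) - a m| ≤ η * j * q (m + j) := by
  induction j with
  | zero => simp
  | succ j ih =>
    have hstep := hN (m + j) (by omega)
    have hq_le : q (m + j) ≤ q (m + j + 1) := hmono (by omega)
    have hj : 0 ≤ η * j := by positivity
    calc |a (m + (j + 1)) - a m| ≤ |a (m + j + 1) - a (m + j)| + |a (m + j) - a m| := by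
          rw [← add_assoc]; exact abs_sub_le _ _ _
      _ ≤ η * q (m + j + 1) + η * j * q (m + j + 1) := by
          gcongr; exact ih.trans (mul_le_mul_of_nonneg_left hq_le hj)
      _ = η * ↑(j + 1) * q (m + (j + 1)) := by push_cast; ring_nf

lemma abs_sub_mul_weight_le (hq : ∀ n, 2 ≤ q n) (hmono : Monotone q) (hη : 0 ≤ η)
    (hN : ∀ k ≥ N, |a (k + 1) - a k| ≤ η * q (k + 1)) (hm : N ≤ m) (j : ℕ) :
    |(a (m + j) - a m) * weight q m j| ≤ 2 * η / q m * (j * (1 / 2) ^ j) := by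
  have hq₀ : ∀ n, 0 < q n := fun n ↦ zero_lt_two.trans_le (hq n)
  cases j with
  | zero => simp
  | succ j =>
    have hw := weight_pos hq₀ m (j + 1)
    have hcancel : q (m + (j + 1)) * weight q m (j + 1) = weight q m j := by
      rw [weight_succ_eq_div, mul_div_cancel₀ _ (hq₀ _).ne']
    calc |(a (m + (j + 1)) - a m) * weight q m (j + 1)|
        ≤ η * ↑(j + 1) * q (m + (j + 1)) * weight q m (j + 1) := by
          rw [abs_mul, abs_of_pos hw]
          gcongr; exact abs_sub_le_of_abs_succ_sub_le hmono hη hN hm _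
      _ = η * ↑(j + 1) * weight q m j := by rw [mul_assoc, hcancel]
      _ ≤ η * ↑(j + 1) * ((q m)⁻¹ * (1 / 2) ^ j) := by
          gcongr; exact weight_le_geometric hq m j
      _ = 2 * η / q m * (↑(j + 1) * (1 / 2) ^ (j + 1)) := by ring

lemma summable_sub_mul_weight (hq : ∀ n, 2 ≤ q n) (hmono : Monotone q) (hη : 0 ≤ η)
    (hN : ∀ k ≥ N, |a (k + 1) - a k| ≤ η * q (k + 1)) (hm : N ≤ m) :
    Summable fun j ↦ (a (m + j) - a m) * weight q m j :=
  .of_norm_bounded (hasSum_coe_mul_half_pow.summable.mul_left (2 * η / q m))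
    (abs_sub_mul_weight_le hq hmono hη hN hm)

lemma abs_tsum_sub_mul_weight_le (hq : ∀ n, 2 ≤ q n) (hmono : Monotone q) (hη : 0 ≤ η)
    (hN : ∀ k ≥ N, |a (k + 1) - a k| ≤ η * q (k + 1)) (hm : N ≤ m) :
    |∑' j, (a (m + j) - a m) * weight q m j| ≤ 4 * η / q m := by
  have hs : Summable fun j ↦ ‖(a (m + j) - a m) * weight q m j‖ :=
    (summable_sub_mul_weight hq hmono hη hN hm).norm
  calc ‖∑' j, (a (m + j) - a m) * weight q m j‖
      ≤ ∑' j, ‖(a (m + j) - a m) * weight q m j‖ := norm_tsum_le_tsum_norm hs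
    _ ≤ 2 * η / q m * 2 := hasSum_le (abs_sub_mul_weight_le hq hmono hη hN hm) hs.hasSum
        (hasSum_coe_mul_half_pow.mul_left _)
    _ = 4 * η / q m := by ring

end Increments

section Tail

lemma summable_mul_weight_iff_succ (hq : q m ≠ 0) :
    (Summable fun j ↦ a (m + j) * weight q m j) ↔
      Summable fun j ↦ a (m + 1 + j) * weight q (m + 1) j := by
  rw [← summable_nat_add_iff 1, ← summable_mul_left_iff (inv_ne_zero hq)
    (f := fun j ↦ a (m + 1 + j) * weight q (m + 1) j)]
  refine summable_congr fun j ↦ ?_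
  rw [weight_succ_eq_inv_mul, add_comm j 1, ← add_assoc]
  ring

lemma summable_mul_weight_of_le {η : ℝ} {N : ℕ} (hq : ∀ n, 2 ≤ q n) (hmono : Monotone q)
    (hη : 0 ≤ η) (hN : ∀ k ≥ N, |a (k + 1) - a k| ≤ η * q (k + 1)) (hm : N ≤ m) :
    Summable fun j ↦ a (m + j) * weight q m j := by
  convert (summable_sub_mul_weight hq hmono hη hN hm).add ((summable_weight hq m).mul_left (a m))
    using 1
  ext j; ring

lemma tail_eq_inv_mul (hs : Summable fun j ↦ a (m + j) * weight q m j) :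
    tail q a m = (q m)⁻¹ * (a m + tail q a (m + 1)) := by
  rw [tail, hs.tsum_eq_zero_add, tail, mul_add, ← tsum_mul_left, add_zero, weight_zero, mul_comm]
  congr 2; ext j
  rw [weight_succ_eq_inv_mul, add_comm j 1, ← add_assoc]
  ring

lemma tail_succ (hq : q m ≠ 0) (hs : Summable fun j ↦ a (m + j) * weight q m j) :
    tail q a (m + 1) = q m * tail q a m - a m := by
  rw [tail_eq_inv_mul hs, ← mul_assoc, mul_inv_cancel₀ hq]
  ring

lemma tail_eq_mul_tsum_weight_add {η : ℝ} {N : ℕ} (hq : ∀ n, 2 ≤ q n) (hmono : Monotone q)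
    (hη : 0 ≤ η) (hN : ∀ k ≥ N, |a (k + 1) - a k| ≤ η * q (k + 1)) (hm : N ≤ m) :
    tail q a m = a m * ∑' j, weight q m j + ∑' j, (a (m + j) - a m) * weight q m j := by
  rw [tail, ← tsum_mul_left, ← ((summable_weight hq m).mul_left (a m)).tsum_add
    (summable_sub_mul_weight hq hmono hη hN hm)]
  congr 1; ext j; ring

lemma exists_abs_tail_succ_sub_mul_le {η : ℝ} {N : ℕ} (hq : ∀ n, 2 ≤ q n)
    (hmono : Monotone q) (hη : 0 ≤ η) (hN : ∀ k ≥ N, |a (k + 1) - a k| ≤ η * q (k + 1))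
    (hm : N ≤ m) :
    ∃ θ ∈ Set.Icc (0 : ℝ) 1, |tail q a (m + 1) - θ * tail q a m| ≤ 4 * η := by
  rw [tail_succ (by linarith [hq m]) (summable_mul_weight_of_le hq hmono hη hN hm)]
  exact exists_mem_Icc_abs_sub_mul_le (by linarith [hq m]) (inv_le_tsum_weight hq m)
    (tsum_weight_le hq hmono m) (tail_eq_mul_tsum_weight_add hq hmono hη hN hm)
    (abs_tsum_sub_mul_weight_le hq hmono hη hN hm)

lemma exists_abs_succ_sub_le_of_tendsto (hq : ∀ n, 0 < q n)
    (hlim : Tendsto (fun n ↦ (a (n + 1) - a n) / q (n + 1)) atTop (𝓝 0))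
    {η : ℝ} (hη : 0 < η) :
    ∃ N, ∀ k ≥ N, |a (k + 1) - a k| ≤ η * q (k + 1) := by
  obtain ⟨N, hN⟩ := Metric.tendsto_atTop.1 hlim η hη
  refine ⟨N, fun k hk ↦ ?_⟩
  have h := hN k hk
  rw [Real.dist_0_eq_abs, abs_div, abs_of_pos (hq _), div_lt_iff₀ (hq _)] at h
  exact h.le

lemma summable_mul_weight_of_tendsto (hq : ∀ n, 2 ≤ q n) (hmono : Monotone q)
    (hlim : Tendsto (fun n ↦ (a (n + 1) - a n) / q (n + 1)) atTop (𝓝 0)) (m : ℕ) :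
    Summable fun j ↦ a (m + j) * weight q m j := by
  have hq₀ : ∀ n, 0 < q n := fun n ↦ zero_lt_two.trans_le (hq n)
  have hiff : ∀ n, (Summable fun j ↦ a (0 + j) * weight q 0 j) ↔
      Summable fun j ↦ a (n + j) * weight q n j := fun n ↦ by
    induction n with
    | zero => rfl
    | succ n ih => exact ih.trans (summable_mul_weight_iff_succ (hq₀ n).ne')
  obtain ⟨N, hN⟩ := exists_abs_succ_sub_le_of_tendsto hq₀ hlim one_pos
  exact (hiff m).1 ((hiff N).2 (summable_mul_weight_of_le hq hmono zero_le_one hN le_rfl))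

lemma exists_forall_ge_abs_tail_succ_sub_mul_le (hq : ∀ n, 2 ≤ q n) (hmono : Monotone q)
    (hlim : Tendsto (fun n ↦ (a (n + 1) - a n) / q (n + 1)) atTop (𝓝 0))
    {δ : ℝ} (hδ : 0 < δ) : ∃ N, ∀ m ≥ N,
      ∃ θ ∈ Set.Icc (0 : ℝ) 1, |tail q a (m + 1) - θ * tail q a m| ≤ δ := by
  obtain ⟨N, hN⟩ := exists_abs_succ_sub_le_of_tendsto (fun n ↦ zero_lt_two.trans_le (hq n))
    hlim (div_pos hδ four_pos)
  refine ⟨N, fun m hm ↦ ?_⟩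
  obtain ⟨θ, hθ, hle⟩ := exists_abs_tail_succ_sub_mul_le hq hmono (by positivity) hN hm
  exact ⟨θ, hθ, hle.trans_eq (mul_div_cancel₀ δ four_ne_zero)⟩

lemma tail_eq_of_eq_mul_sub_one (hq : ∀ n, 2 ≤ q n)
    (hs : Summable fun j ↦ a (m + j) * weight q m j) {c : ℝ}
    (h : ∀ n ≥ m, a n = c * (q n - 1)) : tail q a m = c := by
  have hq₀ : ∀ n, q n ≠ 0 := fun n ↦ (zero_lt_two.trans_le (hq n)).ne'
  have hpartial (n : ℕ) :
      ∑ j ∈ range (n + 1), a (m + j) * weight q m j = c - c * weight q m n := by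
    induction n with
    | zero =>
      rw [zero_add, sum_range_one, add_zero, h m le_rfl, weight_zero]
      field_simp [hq₀ m]
    | succ n ih =>
      rw [sum_range_succ, ih, h _ (by omega), weight_succ_eq_div]
      field_simp [hq₀ (m + (n + 1))]
      ring
  refine (hs.hasSum_iff_tendsto_nat.2 ?_).tsum_eq
  rw [← tendsto_add_atTop_iff_nat 1]
  simp only [hpartial]
  simpa using ((summable_weight hq m).tendsto_atTop_zero.const_mul c).const_sub c

end Tail

end

section Rational

variable {T : ℕ → ℝ} {q : ℕ → ℕ} {ε : ℕ → ℤ}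

lemma exists_int_eq_den_mul_of_succ_eq (hT : ∀ m, T (m + 1) = q m * T m - ε m) {r : ℚ}
    (h₀ : T 0 = r) (m : ℕ) : ∃ z : ℤ, (z : ℝ) = r.den * T m := by
  induction m with
  | zero => exact ⟨r.num, by rw [h₀, Rat.cast_def]; field_simp⟩
  | succ m ih =>
    obtain ⟨z, hz⟩ := ih
    exact ⟨q m * z - r.den * ε m, by push_cast; rw [hT, hz]; ring⟩

lemma exists_rat_eq_zero_of_succ_eq (hT : ∀ m, T (m + 1) = q m * T m - ε m)
    (hq : ∀ m, q m ≠ 0) {m : ℕ} {r : ℚ} (hm : T m = r) : ∃ r : ℚ, T 0 = r := by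
  induction m generalizing r with
  | zero => exact ⟨r, hm⟩
  | succ m ih =>
    refine ih (r := (r + ε m) / q m) ?_
    rw [Rat.cast_div, Rat.cast_add, ← hm, hT, Rat.cast_intCast, Rat.cast_natCast]
    field_simp [hq m]
    ring

lemma exists_forall_ge_eq_of_exists_int_eq_mul {d : ℝ} (hd : 0 < d)
    (hz : ∀ m, ∃ z : ℤ, (z : ℝ) = d * T m) {N : ℕ}
    (hcontr : ∀ m ≥ N, ∃ θ ∈ Set.Icc (0 : ℝ) 1, |T (m + 1) - θ * T m| < d⁻¹) :
    ∃ n₀, ∀ n ≥ n₀, T n = T n₀ := by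
  choose z hz using hz
  have hstep : ∀ m ≥ N, z (m + 1) ∈ Set.uIcc 0 (z m) := fun m hm ↦ by
    obtain ⟨θ, hθ, hlt⟩ := hcontr m hm
    refine Int.mem_uIcc_zero_of_abs_sub_mul_lt_one hθ ?_
    calc |(z (m + 1) : ℝ) - θ * z m| = d * |T (m + 1) - θ * T m| := by
          rw [hz, hz, mul_left_comm, ← mul_sub, abs_mul, abs_of_pos hd]
      _ < d * d⁻¹ := by gcongr
      _ = 1 := mul_inv_cancel₀ hd.ne'
  obtain ⟨n₀, hn₀⟩ := Int.exists_forall_ge_eq_of_mem_uIcc_zero hstep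
  refine ⟨n₀, fun n hn ↦ mul_left_cancel₀ hd.ne' ?_⟩
  rw [← hz, ← hz, hn₀ n hn]

lemma exists_eq_mul_sub_one_of_succ_eq (hT : ∀ m, T (m + 1) = q m * T m - ε m) {r : ℚ}
    (h₀ : T 0 = r)
    (hcontr : ∀ δ > 0, ∃ N, ∀ m ≥ N,
      ∃ θ ∈ Set.Icc (0 : ℝ) 1, |T (m + 1) - θ * T m| ≤ δ) :
    ∃ c : ℚ, ∃ n₀ : ℕ, ∀ n ≥ n₀, (ε n : ℚ) = c * ((q n : ℚ) - 1) := by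
  have hd : (0 : ℝ) < r.den := by exact_mod_cast r.pos
  have hz := exists_int_eq_den_mul_of_succ_eq hT h₀
  obtain ⟨N, hN⟩ := hcontr (2 * r.den)⁻¹ (by positivity)
  obtain ⟨n₀, hn₀⟩ := exists_forall_ge_eq_of_exists_int_eq_mul hd hz (N := N) fun m hm ↦
    let ⟨θ, hθ, hle⟩ := hN m hm
    ⟨θ, hθ, hle.trans_lt (inv_strictAnti₀ hd (by linarith))⟩
  obtain ⟨z, hz₀⟩ := hz n₀
  refine ⟨z / r.den, n₀, fun n hn ↦ ?_⟩
  have hrec := hT n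
  rw [hn₀ n hn, hn₀ (n + 1) (by omega)] at hrec
  have : (ε n : ℝ) = ((z / r.den : ℚ) : ℝ) * ((q n : ℝ) - 1) := by
    push_cast
    rw [hz₀, mul_div_cancel_left₀ _ hd.ne']
    linarith
  exact_mod_cast this

end Rational

end TijdemanYuan

open TijdemanYuan in
/-- (Tijdeman–Yuan) Let `(q_n)` be a monotone non-decreasing sequence of
integers `≥ 2` and `(ε_n)` integers with `ε_{n+1} − ε_n = o(q_{n+1})`. Then
`∑ ε_n/(q_1⋯q_n)` is rational iff `ε_n/(q_n − 1)` is a (rational) constant `c` for all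
`n ≥ n₀`. (Sequences are 0-indexed.) -/
theorem tijdeman_yuan_rational_iff_const_ratio
    (q : ℕ → ℕ) (hq : ∀ n, 2 ≤ q n) (hmono : Monotone q)
    (ε : ℕ → ℤ)
    (hlim : Filter.Tendsto (fun n : ℕ => ((ε (n + 1) - ε n : ℤ) : ℝ) / (q (n + 1) : ℝ))
      Filter.atTop (nhds 0)) :
    (∃ r : ℚ, (∑' n : ℕ, (ε n : ℝ) / ∏ i ∈ Finset.range (n + 1), (q i : ℝ)) = (r : ℝ)) ↔
      ∃ c : ℚ, ∃ n₀ : ℕ, ∀ n ≥ n₀, (ε n : ℚ) = c * ((q n : ℚ) - 1) := by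
  set Q : ℕ → ℝ := fun n ↦ q n
  set a : ℕ → ℝ := fun n ↦ ε n
  have hQ : ∀ n, 2 ≤ Q n := fun n ↦ show (2 : ℝ) ≤ q n by exact_mod_cast hq n
  have hQmono : Monotone Q := fun _ _ h ↦ Nat.cast_le.2 (hmono h)
  have hlim' : Tendsto (fun n ↦ (a (n + 1) - a n) / Q (n + 1)) atTop (𝓝 0) := by
    simpa [Q, a] using hlim
  have hsum := summable_mul_weight_of_tendsto hQ hQmono hlim'
  have hrec : ∀ m, tail Q a (m + 1) = q m * tail Q a m - ε m := fun m ↦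
    tail_succ (by positivity [hq m]) (hsum m)
  have hS : ∑' n : ℕ, (ε n : ℝ) / ∏ i ∈ range (n + 1), (q i : ℝ) = tail Q a 0 := by
    simp [Q, a, tail, weight, div_eq_mul_inv]
  rw [hS]
  constructor
  · rintro ⟨r, hr⟩
    exact exists_eq_mul_sub_one_of_succ_eq hrec hr fun δ hδ ↦
      exists_forall_ge_abs_tail_succ_sub_mul_le hQ hQmono hlim' hδ
  · rintro ⟨c, n₀, h⟩
    exact exists_rat_eq_zero_of_succ_eq hrec (fun n ↦ by have := hq n; omega) (r := c)
      (tail_eq_of_eq_mul_sub_one hQ (hsum n₀) fun n hn ↦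
        show (ε n : ℝ) = c * ((q n : ℝ) - 1) by exact_mod_cast h n hn)
end

section
/- Let (ε_k) be a sequence of integers and (q_k) a sequence of positive integers such that q_k ≥ 2 for all sufficiently large k and |ε_k|/(q_{k−1} q_k) → 0 as k → ∞. Then ∑_{k=1}^∞ ε_k/(q_1 q_2 ⋯ q_k) is rational if and only if there exist a positive integer B and a sequence of integers (c_k) such that for all sufficiently large k one has B ε_k = c_k q_k − c_{k+1} and |c_{k+1}| < q_k/2. -/
open Finset Filter

/-!
If the sum is `a / B`, the numbers `c_k = B q_0⋯q_{k-1} ∑_{j ≥ k} ε_j / (q_0⋯q_j)` are integers,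
since they obey `c_{k+1} = c_k q_k - B ε_k` starting from `c_0 = a`. Once `q_j ≥ 2` and
`|ε_{j+1}| ≤ δ q_j q_{j+1}`, the tail after `k` is at most `2δ / (q_0⋯q_{k-1})`, so choosing
`δ = 1 / (8B)` gives `|c_{k+1}| ≤ q_k / 4`.

Conversely, the recurrence makes the series telescope, `ε_k / (q_0⋯q_k) = g_k - g_{k+1}` with
`g_k = c_k / (B q_0⋯q_{k-1})`, and `|c_{k+1}| < q_k / 2` gives `|g_{k+1}| ≤ 1 / (q_0⋯q_{k-1}) → 0`;
hence the sum is a finite sum of rationals plus `g_M`.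
-/

noncomputable def cantorSeriesTerm (q : ℕ → ℕ) (ε : ℕ → ℤ) (k : ℕ) : ℝ :=
  ε k / ∏ i ∈ range (k + 1), (q i : ℝ)

theorem Summable.tsum_eq_of_eq_sub_succ {G : Type*} [AddCommGroup G] [TopologicalSpace G]
    [IsTopologicalAddGroup G] [T2Space G] {f g : ℕ → G} (hf : Summable f)
    (hfg : ∀ n, f n = g n - g (n + 1)) (hg : Tendsto g atTop (nhds 0)) :
    ∑' n, f n = g 0 := by
  refine tendsto_nhds_unique hf.hasSum.tendsto_sum_nat ?_
  simp_rw [hfg, sum_range_sub']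
  simpa using (tendsto_const_nhds (x := g 0)).sub hg

section

variable {q : ℕ → ℕ} {ε : ℕ → ℤ}

theorem prod_range_cast_pos (hqpos : ∀ k, 0 < q k) (n : ℕ) : 0 < ∏ i ∈ range n, (q i : ℝ) :=
  prod_pos fun i _ => Nat.cast_pos.mpr (hqpos i)

theorem prod_range_mul_two_pow_le {N k : ℕ} (hq : ∀ i, N ≤ i → 2 ≤ q i) (hk : N ≤ k) (m : ℕ) :
    (∏ i ∈ range k, (q i : ℝ)) * 2 ^ m ≤ ∏ i ∈ range (k + m), (q i : ℝ) := by
  induction m with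
  | zero => simp
  | succ m ih =>
    rw [← add_assoc, prod_range_succ, pow_succ, ← mul_assoc]
    exact mul_le_mul ih (mod_cast hq _ (by omega)) (by norm_num)
      (prod_nonneg fun _ _ => by positivity)

theorem tendsto_prod_range_atTop (hqpos : ∀ k, 0 < q k) (hq : ∀ᶠ k in atTop, 2 ≤ q k) :
    Tendsto (fun n => ∏ i ∈ range n, (q i : ℝ)) atTop atTop := by
  obtain ⟨N, hN⟩ := hq.exists_forall_of_atTop
  rw [← tendsto_add_atTop_iff_nat N]
  refine tendsto_atTop_mono (f := fun m => (∏ i ∈ range N, (q i : ℝ)) * 2 ^ m) (fun m => ?_) ?_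
  · rw [add_comm m]
    exact prod_range_mul_two_pow_le hN le_rfl m
  exact (tendsto_pow_atTop_atTop_of_one_lt one_lt_two).const_mul_atTop
    (prod_range_cast_pos hqpos N)

theorem exists_forall_two_le_and_abs_le_mul (hqpos : ∀ k, 0 < q k) (hq : ∀ᶠ k in atTop, 2 ≤ q k)
    (hlim : Tendsto (fun k => (|ε (k + 1)| : ℝ) / ((q k : ℝ) * (q (k + 1) : ℝ))) atTop (nhds 0))
    {δ : ℝ} (hδ : 0 < δ) :
    ∃ N, ∀ i, N ≤ i → 2 ≤ q i ∧ |(ε (i + 1) : ℝ)| ≤ δ * (q i * q (i + 1)) := by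
  obtain ⟨N, hN⟩ := (hq.and (hlim.eventually (gt_mem_nhds hδ))).exists_forall_of_atTop
  refine ⟨N, fun i hi => ⟨(hN i hi).1, ?_⟩⟩
  have hpos : (0 : ℝ) < q i * q (i + 1) := by have := hqpos i; have := hqpos (i + 1); positivity
  exact ((div_lt_iff₀ hpos).1 (hN i hi).2).le

variable {N : ℕ} {δ : ℝ}

theorem abs_cantorSeriesTerm_le (hqpos : ∀ k, 0 < q k) (hδ : 0 ≤ δ)
    (hN : ∀ i, N ≤ i → 2 ≤ q i ∧ |(ε (i + 1) : ℝ)| ≤ δ * (q i * q (i + 1)))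
    {k : ℕ} (hk : N ≤ k) (m : ℕ) :
    |cantorSeriesTerm q ε (m + (k + 1))| ≤ δ / (∏ i ∈ range k, (q i : ℝ)) * (1 / 2) ^ m := by
  have hQ := prod_range_cast_pos hqpos
  have hqq : (0 : ℝ) < q (k + m) * q (k + m + 1) := by
    have := hqpos (k + m); have := hqpos (k + m + 1); positivity
  have hsplit : ∏ i ∈ range (m + (k + 1) + 1), (q i : ℝ) =
      (∏ i ∈ range (k + m), (q i : ℝ)) * (q (k + m) * q (k + m + 1)) := by
    rw [show m + (k + 1) + 1 = k + m + 1 + 1 by omega, prod_range_succ, prod_range_succ, mul_assoc]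
  calc |cantorSeriesTerm q ε (m + (k + 1))|
      = |(ε (k + m + 1) : ℝ)| /
          ((∏ i ∈ range (k + m), (q i : ℝ)) * (q (k + m) * q (k + m + 1))) := by
        rw [cantorSeriesTerm, hsplit, abs_div, abs_of_pos (mul_pos (hQ _) hqq),
          show m + (k + 1) = k + m + 1 by omega]
    _ ≤ δ * (q (k + m) * q (k + m + 1)) /
          ((∏ i ∈ range (k + m), (q i : ℝ)) * (q (k + m) * q (k + m + 1))) := by
        gcongr
        exact (hN _ (by omega)).2
    _ = δ / ∏ i ∈ range (k + m), (q i : ℝ) := mul_div_mul_right _ _ hqq.ne'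
    _ ≤ δ / ((∏ i ∈ range k, (q i : ℝ)) * 2 ^ m) := by
        gcongr
        · exact mul_pos (hQ k) (by positivity)
        · exact prod_range_mul_two_pow_le (fun i hi => (hN i hi).1) hk m
    _ = δ / (∏ i ∈ range k, (q i : ℝ)) * (1 / 2) ^ m := by
        rw [one_div_pow, div_mul_div_comm, mul_one]

theorem summable_cantorSeriesTerm_add (hqpos : ∀ k, 0 < q k) (hδ : 0 ≤ δ)
    (hN : ∀ i, N ≤ i → 2 ≤ q i ∧ |(ε (i + 1) : ℝ)| ≤ δ * (q i * q (i + 1)))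
    {k : ℕ} (hk : N ≤ k) :
    Summable fun m => cantorSeriesTerm q ε (m + (k + 1)) :=
  (summable_geometric_two.mul_left _).of_norm_bounded
    fun m => (Real.norm_eq_abs _).trans_le (abs_cantorSeriesTerm_le hqpos hδ hN hk m)

theorem abs_tsum_cantorSeriesTerm_add_le (hqpos : ∀ k, 0 < q k) (hδ : 0 ≤ δ)
    (hN : ∀ i, N ≤ i → 2 ≤ q i ∧ |(ε (i + 1) : ℝ)| ≤ δ * (q i * q (i + 1)))
    {k : ℕ} (hk : N ≤ k) :
    |∑' m, cantorSeriesTerm q ε (m + (k + 1))| ≤ δ / (∏ i ∈ range k, (q i : ℝ)) * 2 :=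
  tsum_of_norm_bounded (hasSum_geometric_two.mul_left _)
    fun m => (Real.norm_eq_abs _).trans_le (abs_cantorSeriesTerm_le hqpos hδ hN hk m)

theorem summable_cantorSeriesTerm (hqpos : ∀ k, 0 < q k) (hq : ∀ᶠ k in atTop, 2 ≤ q k)
    (hlim : Tendsto (fun k => (|ε (k + 1)| : ℝ) / ((q k : ℝ) * (q (k + 1) : ℝ))) atTop (nhds 0)) :
    Summable (cantorSeriesTerm q ε) := by
  obtain ⟨N, hN⟩ := exists_forall_two_le_and_abs_le_mul hqpos hq hlim one_pos
  exact (summable_nat_add_iff (N + 1)).1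
    (summable_cantorSeriesTerm_add hqpos zero_le_one hN le_rfl)

/-- `B q_0⋯q_{k-1}` times the `k`-th tail of a series of sum `a / B` (see `cast_tailNumerator`),
defined through its recurrence so that it is visibly an integer. -/
def tailNumerator (q : ℕ → ℕ) (ε : ℕ → ℤ) (B : ℕ) (a : ℤ) : ℕ → ℤ
  | 0 => a
  | k + 1 => tailNumerator q ε B a k * q k - B * ε k

theorem cast_tailNumerator (hqpos : ∀ k, 0 < q k) {B : ℕ} {a : ℤ} {s : ℝ} (ha : (a : ℝ) = B * s)
    (k : ℕ) : (tailNumerator q ε B a k : ℝ) =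
      B * (∏ i ∈ range k, (q i : ℝ)) * (s - ∑ m ∈ range k, cantorSeriesTerm q ε m) := by
  induction k with
  | zero => simp [tailNumerator, ha]
  | succ k ih =>
    have hQ := (prod_range_cast_pos hqpos k).ne'
    have hqk : (q k : ℝ) ≠ 0 := Nat.cast_ne_zero.mpr (hqpos k).ne'
    simp only [tailNumerator, Int.cast_sub, Int.cast_mul, Int.cast_natCast, ih, sum_range_succ,
      prod_range_succ, cantorSeriesTerm]
    field_simp
    ring

theorem exists_recurrence_of_tsum_eq_rat (hqpos : ∀ k, 0 < q k) (hq : ∀ᶠ k in atTop, 2 ≤ q k)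
    (hlim : Tendsto (fun k => (|ε (k + 1)| : ℝ) / ((q k : ℝ) * (q (k + 1) : ℝ))) atTop (nhds 0))
    {r : ℚ} (hr : ∑' k, cantorSeriesTerm q ε k = r) :
    ∃ B : ℕ, 0 < B ∧ ∃ c : ℕ → ℤ, ∀ᶠ k in atTop,
      (B : ℤ) * ε k = c k * q k - c (k + 1) ∧ ((|c (k + 1)| : ℤ) : ℝ) < q k / 2 := by
  have hB : (0 : ℝ) < r.den := Nat.cast_pos.mpr r.pos
  obtain ⟨N, hN⟩ := exists_forall_two_le_and_abs_le_mul hqpos hq hlim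
    (show (0 : ℝ) < 1 / (8 * r.den) by positivity)
  refine ⟨r.den, r.pos, tailNumerator q ε r.den r.num, eventually_atTop.2 ⟨N, fun k hk => ⟨?_, ?_⟩⟩⟩
  · simp only [tailNumerator]
    ring
  have hQ := prod_range_cast_pos hqpos k
  have hqk : (0 : ℝ) < q k := Nat.cast_pos.mpr (hqpos k)
  have htail : (tailNumerator q ε r.den r.num (k + 1) : ℝ) =
      r.den * ((∏ i ∈ range k, (q i : ℝ)) * q k) * ∑' m, cantorSeriesTerm q ε (m + (k + 1)) := by
    rw [cast_tailNumerator hqpos (s := r) (by rw [Rat.cast_def]; field_simp), ← hr,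
      ← (summable_cantorSeriesTerm hqpos hq hlim).sum_add_tsum_nat_add (k + 1), prod_range_succ]
    ring
  calc ((|tailNumerator q ε r.den r.num (k + 1)| : ℤ) : ℝ)
      = r.den * ((∏ i ∈ range k, (q i : ℝ)) * q k) *
          |∑' m, cantorSeriesTerm q ε (m + (k + 1))| := by
        rw [Int.cast_abs, htail, abs_mul, abs_of_pos (by positivity)]
    _ ≤ r.den * ((∏ i ∈ range k, (q i : ℝ)) * q k) *
          (1 / (8 * r.den) / (∏ i ∈ range k, (q i : ℝ)) * 2) := by
        gcongr
        exact abs_tsum_cantorSeriesTerm_add_le hqpos (by positivity) hN hk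
    _ = q k / 4 := by
        field_simp
        ring
    _ < q k / 2 := by linarith

theorem exists_rat_tsum_eq_of_recurrence (hqpos : ∀ k, 0 < q k) (hq : ∀ᶠ k in atTop, 2 ≤ q k)
    (hsum : Summable (cantorSeriesTerm q ε)) {B : ℕ} (hB : 0 < B) {c : ℕ → ℤ}
    (hc : ∀ᶠ k in atTop,
      (B : ℤ) * ε k = c k * q k - c (k + 1) ∧ ((|c (k + 1)| : ℤ) : ℝ) < q k / 2) :
    ∃ r : ℚ, ∑' k, cantorSeriesTerm q ε k = r := by
  have hBR : (0 : ℝ) < B := Nat.cast_pos.mpr hB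
  have hQ := prod_range_cast_pos hqpos
  set g : ℕ → ℝ := fun k => c k / (B * ∏ i ∈ range k, (q i : ℝ)) with hg
  obtain ⟨M, hM⟩ := hc.exists_forall_of_atTop
  have htel : ∀ k, M ≤ k → cantorSeriesTerm q ε k = g k - g (k + 1) := by
    intro k hk
    have hrec : (B : ℝ) * ε k = c k * q k - c (k + 1) := mod_cast (hM k hk).1
    have hqk : (q k : ℝ) ≠ 0 := Nat.cast_ne_zero.mpr (hqpos k).ne'
    have hQk := (hQ k).ne'
    simp only [hg, cantorSeriesTerm, prod_range_succ]
    field_simp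
    linear_combination hrec
  have hg0 : Tendsto g atTop (nhds 0) := by
    rw [← tendsto_add_atTop_iff_nat 1]
    refine squeeze_zero_norm' ?_ ((tendsto_prod_range_atTop hqpos hq).inv_tendsto_atTop)
    filter_upwards [hc] with k hk
    have hqk : (0 : ℝ) < q k := Nat.cast_pos.mpr (hqpos k)
    have hQk := hQ k
    calc ‖g (k + 1)‖ = |(c (k + 1) : ℝ)| / (B * ((∏ i ∈ range k, (q i : ℝ)) * q k)) := by
          rw [Real.norm_eq_abs, hg, abs_div, prod_range_succ,
            abs_of_pos (mul_pos hBR (mul_pos hQk hqk))]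
      _ ≤ B * q k / (B * ((∏ i ∈ range k, (q i : ℝ)) * q k)) := by
          gcongr
          have hB1 : (1 : ℝ) ≤ B := Nat.one_le_cast.mpr hB
          rw [← Int.cast_abs]
          nlinarith [hk.2]
      _ = (∏ i ∈ range k, (q i : ℝ))⁻¹ := by
          field_simp
  have htsum := (summable_nat_add_iff M).2 hsum |>.tsum_eq_of_eq_sub_succ
    (g := fun m => g (m + M)) (fun m => by rw [htel _ (by omega), add_right_comm])
    ((tendsto_add_atTop_iff_nat M).2 hg0)
  refine ⟨∑ k ∈ range M, (ε k : ℚ) / ∏ i ∈ range (k + 1), (q i : ℚ) +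
    c M / (B * ∏ i ∈ range M, (q i : ℚ)), ?_⟩
  rw [← hsum.sum_add_tsum_nat_add M, htsum]
  simp only [cantorSeriesTerm, hg, zero_add]
  push_cast
  rfl

end

/-- (Erdős–Straus) Let `(ε_k)` be integers and `(q_k)` positive integers
with `q_k ≥ 2` for all large `k` and `|ε_k|/(q_{k−1} q_k) → 0`. Then `∑ ε_k/(q_1⋯q_k)` is
rational iff there exist a positive integer `B` and integers `(c_k)` such that, for all
large `k`, `B ε_k = c_k q_k − c_{k+1}` and `|c_{k+1}| < q_k/2`. (Sequences are 0-indexed,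
so the ratio condition reads `|ε_{k+1}|/(q_k q_{k+1}) → 0`.) -/
theorem erdos_straus_rational_iff
    (q : ℕ → ℕ) (hqpos : ∀ k, 0 < q k)
    (hq : ∀ᶠ k : ℕ in Filter.atTop, 2 ≤ q k)
    (ε : ℕ → ℤ)
    (hlim : Filter.Tendsto (fun k : ℕ => (|ε (k + 1)| : ℝ) / ((q k : ℝ) * (q (k + 1) : ℝ)))
      Filter.atTop (nhds 0)) :
    (∃ r : ℚ, (∑' k : ℕ, (ε k : ℝ) / ∏ i ∈ Finset.range (k + 1), (q i : ℝ)) = (r : ℝ)) ↔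
      ∃ B : ℕ, 0 < B ∧ ∃ c : ℕ → ℤ, ∀ᶠ k : ℕ in Filter.atTop,
        (B : ℤ) * ε k = c k * (q k : ℤ) - c (k + 1) ∧
        ((|c (k + 1)| : ℤ) : ℝ) < (q k : ℝ) / 2 := by
  constructor
  · rintro ⟨r, hr⟩
    exact exists_recurrence_of_tsum_eq_rat hqpos hq hlim hr
  · rintro ⟨B, hB, c, hc⟩
    exact exists_rat_tsum_eq_of_recurrence hqpos hq (summable_cantorSeriesTerm hqpos hq hlim) hB hc
end
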